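/- arXiv:1010.3083 — 9 statements merged into one kernel-verified Lean document; each statement's English description precedes it below -/
import Mathlib

section
/- A pair (x,y) ∈ Δ₁ × Δ₂ is a Nash equilibrium of the bimatrix game (A,B) if and only if there exist π₁, π₂ ∈ ℝ such that (y,π₁) ∈ P, (x,π₂) ∈ Q, and the pair ((y,π₁),(x,π₂)) is fully labeled. -/
open Finset

/-- Membership in the standard probability simplex. -/
def InSimplex {d : ℕ} (x : Fin d → ℝ) : Prop := (∀ i, 0 ≤ x i) ∧ ∑ i, x i = 1

/-- `(x, y)` is a Nash equilibrium of the bimatrix game `(A, B)`. -/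
def IsNash {m n : ℕ} (A B : Fin m → Fin n → ℝ) (x : Fin m → ℝ) (y : Fin n → ℝ) : Prop :=
  InSimplex x ∧ InSimplex y ∧
    (∀ x', InSimplex x' → ∑ i, ∑ j, x' i * A i j * y j ≤ ∑ i, ∑ j, x i * A i j * y j) ∧
    (∀ y', InSimplex y' → ∑ i, ∑ j, x i * B i j * y' j ≤ ∑ i, ∑ j, x i * B i j * y j)

/-- Membership in the row player's best-response polytope `P`. -/
def MemP {m n : ℕ} (A : Fin m → Fin n → ℝ) (v : (Fin n → ℝ) × ℝ) : Prop :=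
  (∀ i, ∑ j, A i j * v.1 j ≤ v.2) ∧ (∀ j, 0 ≤ v.1 j) ∧ ∑ j, v.1 j = 1

/-- Membership in the column player's best-response polytope `Q`. -/
def MemQ {m n : ℕ} (B : Fin m → Fin n → ℝ) (w : (Fin m → ℝ) × ℝ) : Prop :=
  (∀ i, 0 ≤ w.1 i) ∧ (∀ j, ∑ i, w.1 i * B i j ≤ w.2) ∧ ∑ i, w.1 i = 1

/-- Tight labels at a point of `P`. -/
def LabelP {m n : ℕ} (A : Fin m → Fin n → ℝ) (v : (Fin n → ℝ) × ℝ) : Set (Fin m ⊕ Fin n) :=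
  {l | Sum.elim (fun i => ∑ j, A i j * v.1 j = v.2) (fun j => v.1 j = 0) l}

/-- Tight labels at a point of `Q`. -/
def LabelQ {m n : ℕ} (B : Fin m → Fin n → ℝ) (w : (Fin m → ℝ) × ℝ) : Set (Fin m ⊕ Fin n) :=
  {l | Sum.elim (fun i => w.1 i = 0) (fun j => ∑ i, w.1 i * B i j = w.2) l}

private lemma sumA {m n : ℕ} (A : Fin m → Fin n → ℝ) (x : Fin m → ℝ) (y : Fin n → ℝ) :
    ∑ i, ∑ j, x i * A i j * y j = ∑ i, x i * (∑ j, A i j * y j) := by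
  simp [Finset.mul_sum, mul_assoc]

private lemma sumB {m n : ℕ} (B : Fin m → Fin n → ℝ) (x : Fin m → ℝ) (y : Fin n → ℝ) :
    ∑ i, ∑ j, x i * B i j * y j = ∑ j, (∑ i, x i * B i j) * y j := by
  rw [Finset.sum_comm]
  simp [Finset.sum_mul]

private lemma cs {d : ℕ} (u v : Fin d → ℝ) (hu : ∀ i, 0 ≤ u i) (hv : ∀ i, 0 ≤ v i)
    (h : ∑ i, u i * v i = 0) : ∀ i, u i = 0 ∨ v i = 0 := by
  have hz : ∀ i ∈ Finset.univ, u i * v i = 0 := by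
    intro i _
    have := (Finset.sum_eq_zero_iff_of_nonneg
      (fun i _ => mul_nonneg (hu i) (hv i))).1 h i (Finset.mem_univ i)
    exact this
  intro i
  exact mul_eq_zero.1 (hz i (Finset.mem_univ i))

/-- `(x,y) ∈ Δ₁ × Δ₂` is a Nash equilibrium of `(A,B)` iff there exist
`π₁, π₂` such that `(y,π₁) ∈ P`, `(x,π₂) ∈ Q` and the pair is fully labeled. -/
theorem nash_iff_fully_labeled {m n : ℕ} (hm : 1 ≤ m) (hn : 1 ≤ n)
    (A B : Fin m → Fin n → ℝ) (x : Fin m → ℝ) (y : Fin n → ℝ) :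
    IsNash A B x y ↔
      ∃ π₁ π₂ : ℝ, MemP A (y, π₁) ∧ MemQ B (x, π₂) ∧
        ∀ l : Fin m ⊕ Fin n, l ∈ LabelP A (y, π₁) ∪ LabelQ B (x, π₂) := by
  constructor
  · rintro ⟨⟨hx0, hx1⟩, ⟨hy0, hy1⟩, hA, hB⟩
    set s : Fin m → ℝ := fun i => ∑ j, A i j * y j with hs
    set t : Fin n → ℝ := fun j => ∑ i, x i * B i j with ht
    refine ⟨∑ i, x i * s i, ∑ j, t j * y j, ?_, ?_, ?_⟩
    · refine ⟨fun i => ?_, hy0, hy1⟩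
      have hsimp : InSimplex (fun i' => if i' = i then (1:ℝ) else 0) := by
        constructor
        · intro i'
          by_cases h : i' = i <;> simp [h]
        · simp
      have := hA _ hsimp
      rw [sumA, sumA] at this
      have heq : ∑ i', (if i' = i then (1:ℝ) else 0) * s i' = s i := by
        simp
      simpa [heq] using this
    · refine ⟨hx0, fun j => ?_, hx1⟩
      have hsimp : InSimplex (fun j' => if j' = j then (1:ℝ) else 0) := by
        constructor
        · intro j'
          by_cases h : j' = j <;> simp [h]
        · simp
      have := hB _ hsimp
      rw [sumB, sumB] at this
      have heq : ∑ j', t j' * (if j' = j then (1:ℝ) else 0) = t j := by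
        simp
      simpa [heq] using this
    · have hle1 : ∀ i, s i ≤ ∑ i', x i' * s i' := by
        intro i
        have hsimp : InSimplex (fun i' => if i' = i then (1:ℝ) else 0) := by
          constructor
          · intro i'
            by_cases h : i' = i <;> simp [h]
          · simp
        have := hA _ hsimp
        rw [sumA, sumA] at this
        have heq : ∑ i', (if i' = i then (1:ℝ) else 0) * s i' = s i := by
          simp
        simpa [heq] using this
      have hle2 : ∀ j, t j ≤ ∑ j', t j' * y j' := by
        intro j
        have hsimp : InSimplex (fun j' => if j' = j then (1:ℝ) else 0) := by
          constructor
          · intro j'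
            by_cases h : j' = j <;> simp [h]
          · simp
        have := hB _ hsimp
        rw [sumB, sumB] at this
        have heq : ∑ j', t j' * (if j' = j then (1:ℝ) else 0) = t j := by
          simp
        simpa [heq] using this
      have hcs1 : ∀ i, x i = 0 ∨ (∑ i', x i' * s i') - s i = 0 := by
        apply cs
        · exact hx0
        · intro i; linarith [hle1 i]
        · have : ∑ i, x i * ((∑ i', x i' * s i') - s i)
              = (∑ i, x i) * (∑ i', x i' * s i') - ∑ i, x i * s i := by
            simp [mul_sub, Finset.sum_sub_distrib, Finset.sum_mul]
          rw [this, hx1]; ring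
      have hcs2 : ∀ j, y j = 0 ∨ (∑ j', t j' * y j') - t j = 0 := by
        apply cs
        · exact hy0
        · intro j; linarith [hle2 j]
        · have : ∑ j, y j * ((∑ j', t j' * y j') - t j)
              = (∑ j, y j) * (∑ j', t j' * y j') - ∑ j, t j * y j := by
            simp [mul_sub, Finset.sum_sub_distrib, Finset.sum_mul, mul_comm]
          rw [this, hy1]; ring
      rintro (i | j)
      · rcases hcs1 i with h | h
        · exact Or.inr h
        · exact Or.inl (show s i = ∑ i', x i' * s i' by linarith)
      · rcases hcs2 j with h | h
        · exact Or.inl h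
        · exact Or.inr (show t j = ∑ j', t j' * y j' by linarith)
  · rintro ⟨π₁, π₂, ⟨hP1, hP2, hP3⟩, ⟨hQ1, hQ2, hQ3⟩, hlab⟩
    set s : Fin m → ℝ := fun i => ∑ j, A i j * y j with hs
    set t : Fin n → ℝ := fun j => ∑ i, x i * B i j with ht
    have h1 : ∀ i, s i = π₁ ∨ x i = 0 := by
      intro i
      rcases hlab (Sum.inl i) with h | h
      · exact Or.inl h
      · exact Or.inr h
    have h2 : ∀ j, y j = 0 ∨ t j = π₂ := by
      intro j
      rcases hlab (Sum.inr j) with h | h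
      · exact Or.inl h
      · exact Or.inr h
    have hval1 : ∑ i, x i * s i = π₁ := by
      have : ∑ i, x i * s i = ∑ i, x i * π₁ := by
        apply Finset.sum_congr rfl
        intro i _
        rcases h1 i with h | h
        · rw [h]
        · simp [h]
      rw [this, ← Finset.sum_mul, hQ3, one_mul]
    have hval2 : ∑ j, t j * y j = π₂ := by
      have : ∑ j, t j * y j = ∑ j, π₂ * y j := by
        apply Finset.sum_congr rfl
        intro j _
        rcases h2 j with h | h
        · simp [h]
        · rw [h]
      rw [this, ← Finset.mul_sum, hP3, mul_one]
    refine ⟨⟨hQ1, hQ3⟩, ⟨hP2, hP3⟩, ?_, ?_⟩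
    · intro x' ⟨hx'0, hx'1⟩
      rw [sumA, sumA, hval1]
      calc ∑ i, x' i * s i ≤ ∑ i, x' i * π₁ :=
            Finset.sum_le_sum fun i _ => mul_le_mul_of_nonneg_left (hP1 i) (hx'0 i)
        _ = π₁ := by rw [← Finset.sum_mul, hx'1, one_mul]
    · intro y' ⟨hy'0, hy'1⟩
      rw [sumB, sumB, hval2]
      calc ∑ j, t j * y' j ≤ ∑ j, π₂ * y' j :=
            Finset.sum_le_sum fun j _ => mul_le_mul_of_nonneg_right (hQ2 j) (hy'0 j)
        _ = π₂ := by rw [← Finset.mul_sum, hy'1, mul_one]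
end

section
/- If ((y,π₁),(x,λ,π₂)) is a fully-labeled pair in P × Q' (i.e., an element of N), then for every α : Fin m → ℝ satisfying ∑ i, α i * x i = λ, the pair (x,y) lies in Δ₁ × Δ₂ and is a Nash equilibrium of the game G(α) = (A, C + α·βᵀ); in particular there exists α with (α,x,y) ∈ E_Γ. -/
open Finset

/-- Membership in the extended polytope `Q'`. -/
def MemQ' {m n : ℕ} (C : Fin m → Fin n → ℝ) (β : Fin n → ℝ)
    (w : (Fin m → ℝ) × ℝ × ℝ) : Prop :=
  (∀ i, 0 ≤ w.1 i) ∧ (∀ j, ∑ i, w.1 i * C i j + β j * w.2.1 ≤ w.2.2) ∧ ∑ i, w.1 i = 1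

/-- Tight labels at a point of `Q'`. -/
def LabelQ' {m n : ℕ} (C : Fin m → Fin n → ℝ) (β : Fin n → ℝ)
    (w : (Fin m → ℝ) × ℝ × ℝ) : Set (Fin m ⊕ Fin n) :=
  {l | Sum.elim (fun i => w.1 i = 0) (fun j => ∑ i, w.1 i * C i j + β j * w.2.1 = w.2.2) l}

/-- `p` is a fully-labeled pair of `P × Q'`, i.e. an element of `N`. -/
def MemN {m n : ℕ} (A C : Fin m → Fin n → ℝ) (β : Fin n → ℝ)
    (p : ((Fin n → ℝ) × ℝ) × ((Fin m → ℝ) × ℝ × ℝ)) : Prop :=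
  MemP A p.1 ∧ MemQ' C β p.2 ∧
    ∀ l : Fin m ⊕ Fin n, l ∈ LabelP A p.1 ∪ LabelQ' C β p.2

/-- a fully-labeled pair of `P × Q'` yields a Nash equilibrium of `G(α)`
for every `α` with `∑ i, α i * x i = λ`; in particular some game of the space `Γ`
has `(x, y)` as a Nash equilibrium. -/
theorem fully_labeled_gives_nash {m n : ℕ} (hm : 1 ≤ m) (hn : 1 ≤ n)
    (A C : Fin m → Fin n → ℝ) (β : Fin n → ℝ)
    (y : Fin n → ℝ) (π₁ : ℝ) (x : Fin m → ℝ) (lam π₂ : ℝ)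
    (hN : MemN A C β ((y, π₁), (x, lam, π₂))) :
    (∀ α : Fin m → ℝ, ∑ i, α i * x i = lam →
        IsNash A (fun i j => C i j + α i * β j) x y) ∧
      ∃ α : Fin m → ℝ, IsNash A (fun i j => C i j + α i * β j) x y := by
  obtain ⟨⟨hP1, hP2, hP3⟩, ⟨hQ1, hQ2, hQ3⟩, hlab⟩ := hN
  simp only [MemP, MemQ'] at hP1 hP2 hP3 hQ1 hQ2 hQ3
  have hx : InSimplex x := ⟨hQ1, hQ3⟩
  have hy : InSimplex y := ⟨hP2, hP3⟩
  have hlabi : ∀ i, (∑ j, A i j * y j = π₁) ∨ x i = 0 := by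
    intro i
    have := hlab (Sum.inl i)
    simpa [LabelP, LabelQ', Set.mem_union] using this
  have hlabj : ∀ j, y j = 0 ∨ (∑ i, x i * C i j + β j * lam = π₂) := by
    intro j
    have := hlab (Sum.inr j)
    simpa [LabelP, LabelQ', Set.mem_union] using this
  have key : ∀ α : Fin m → ℝ, ∑ i, α i * x i = lam →
      IsNash A (fun i j => C i j + α i * β j) x y := by
    intro α hα
    refine ⟨hx, hy, ?_, ?_⟩
    · intro x' hx'
      have hgen : ∀ x'' : Fin m → ℝ, ∑ i, ∑ j, x'' i * A i j * y j
          = ∑ i, x'' i * (∑ j, A i j * y j) := by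
        intro x''
        refine Finset.sum_congr rfl fun i _ => ?_
        rw [Finset.mul_sum]
        exact Finset.sum_congr rfl fun j _ => by ring
      rw [hgen, hgen]
      have hub : ∑ i, x' i * (∑ j, A i j * y j) ≤ π₁ := by
        calc ∑ i, x' i * (∑ j, A i j * y j) ≤ ∑ i, x' i * π₁ :=
              Finset.sum_le_sum fun i _ =>
                mul_le_mul_of_nonneg_left (hP1 i) (hx'.1 i)
          _ = π₁ := by rw [← Finset.sum_mul, hx'.2, one_mul]
      have hlb : ∑ i, x i * (∑ j, A i j * y j) = π₁ := by
        calc ∑ i, x i * (∑ j, A i j * y j) = ∑ i, x i * π₁ := by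
              refine Finset.sum_congr rfl fun i _ => ?_
              rcases hlabi i with h | h
              · rw [h]
              · rw [h, zero_mul, zero_mul]
          _ = π₁ := by rw [← Finset.sum_mul, hQ3, one_mul]
      rw [hlb]; exact hub
    · intro y' hy'
      have expand : ∀ y'' : Fin n → ℝ, ∑ i, ∑ j, x i * (C i j + α i * β j) * y'' j
          = ∑ j, (∑ i, x i * C i j + β j * lam) * y'' j := by
        intro y''
        rw [Finset.sum_comm]
        refine Finset.sum_congr rfl fun j _ => ?_
        calc ∑ i, x i * (C i j + α i * β j) * y'' j
            = ∑ i, (x i * C i j * y'' j + α i * x i * (β j * y'' j)) :=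
              Finset.sum_congr rfl fun i _ => by ring
          _ = (∑ i, x i * C i j) * y'' j + (∑ i, α i * x i) * (β j * y'' j) := by
              rw [Finset.sum_add_distrib, Finset.sum_mul, Finset.sum_mul]
          _ = (∑ i, x i * C i j + β j * lam) * y'' j := by rw [hα]; ring
      simp only []
      rw [expand, expand]
      have hub : ∑ j, (∑ i, x i * C i j + β j * lam) * y' j ≤ π₂ := by
        calc ∑ j, (∑ i, x i * C i j + β j * lam) * y' j ≤ ∑ j, π₂ * y' j :=
              Finset.sum_le_sum fun j _ =>
                mul_le_mul_of_nonneg_right (hQ2 j) (hy'.1 j)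
          _ = π₂ := by rw [← Finset.mul_sum, hy'.2, mul_one]
      have hlb : ∑ j, (∑ i, x i * C i j + β j * lam) * y j = π₂ := by
        calc ∑ j, (∑ i, x i * C i j + β j * lam) * y j = ∑ j, π₂ * y j := by
              refine Finset.sum_congr rfl fun j _ => ?_
              rcases hlabj j with h | h
              · rw [h, mul_zero, mul_zero]
              · rw [h]
          _ = π₂ := by rw [← Finset.mul_sum, hP3, mul_one]
      rw [hlb]; exact hub
  exact ⟨key, fun _ => lam, key _ (by rw [← Finset.mul_sum, hQ3, mul_one])⟩
end

section
/- For every (α,x,y) ∈ E_Γ, setting λ = ∑ i, α i * x i, there exist unique π₁, π₂ ∈ ℝ such that ((y,π₁),(x,λ,π₂)) ∈ N; namely π₁ = ∑ i, ∑ j, x i * A i j * y j and π₂ = ∑ i, ∑ j, x i * (C i j + α i * β j) * y j. -/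
open Finset

private lemma cs_forward {d : ℕ} (f g : Fin d → ℝ) (c : ℝ) (hf : ∀ i, 0 ≤ f i)
    (hg : ∀ i, g i ≤ c) (hsum : ∑ i, f i = 1) (h : ∑ i, f i * g i = c) :
    ∀ i, f i = 0 ∨ g i = c := by
  have h0 : ∑ i, f i * (c - g i) = 0 := by
    have : ∑ i, f i * (c - g i) = (∑ i, f i) * c - ∑ i, f i * g i := by
      rw [Finset.sum_mul, ← Finset.sum_sub_distrib]
      congr 1; ext i; ring
    rw [this, hsum, h]; ring
  intro i
  have := (Finset.sum_eq_zero_iff_of_nonneg (fun i _ =>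
    mul_nonneg (hf i) (sub_nonneg.2 (hg i)))).1 h0 i (Finset.mem_univ i)
  rcases mul_eq_zero.1 this with h' | h'
  · exact Or.inl h'
  · exact Or.inr (by linarith [sub_eq_zero.1 h'])

private lemma cs_backward {d : ℕ} (f g : Fin d → ℝ) (c : ℝ)
    (hsum : ∑ i, f i = 1) (h : ∀ i, f i = 0 ∨ g i = c) :
    ∑ i, f i * g i = c := by
  have : ∑ i, f i * g i = ∑ i, f i * c := by
    apply Finset.sum_congr rfl; intro i _
    rcases h i with h' | h' <;> rw [h'] <;> ring
  rw [this, ← Finset.sum_mul, hsum, one_mul]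

private lemma pay_eq1 {m n : ℕ} (A : Fin m → Fin n → ℝ) (x : Fin m → ℝ) (y : Fin n → ℝ) :
    ∑ i, x i * (∑ j, A i j * y j) = ∑ i, ∑ j, x i * A i j * y j := by
  apply Finset.sum_congr rfl; intro i _
  rw [Finset.mul_sum]; apply Finset.sum_congr rfl; intro j _; ring

private lemma pay_eq2 {m n : ℕ} (C : Fin m → Fin n → ℝ) (β : Fin n → ℝ)
    (α : Fin m → ℝ) (x : Fin m → ℝ) (y : Fin n → ℝ) :
    ∑ j, y j * (∑ i, x i * C i j + β j * (∑ i, α i * x i)) =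
      ∑ i, ∑ j, x i * (C i j + α i * β j) * y j := by
  rw [Finset.sum_comm]
  apply Finset.sum_congr rfl; intro j _
  have h2 : y j * (β j * ∑ i, α i * x i) = ∑ i, x i * (α i * β j) * y j := by
    rw [Finset.mul_sum, Finset.mul_sum]
    apply Finset.sum_congr rfl; intro i _; ring
  rw [mul_add, h2, Finset.mul_sum, ← Finset.sum_add_distrib]
  apply Finset.sum_congr rfl; intro i _; ring

private lemma col_eq {m n : ℕ} (C : Fin m → Fin n → ℝ) (β : Fin n → ℝ)
    (α : Fin m → ℝ) (x : Fin m → ℝ) (j : Fin n) :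
    ∑ i, x i * (C i j + α i * β j) = ∑ i, x i * C i j + β j * ∑ i, α i * x i := by
  rw [Finset.mul_sum, ← Finset.sum_add_distrib]
  apply Finset.sum_congr rfl; intro i _; ring

/-- for `(α,x,y) ∈ E_Γ` and `λ = ∑ i, α i * x i`, there are unique
`π₁, π₂` making `((y,π₁),(x,λ,π₂))` fully labeled, namely the equilibrium payoffs. -/
theorem nash_gives_unique_fully_labeled {m n : ℕ} (hm : 1 ≤ m) (hn : 1 ≤ n)
    (A C : Fin m → Fin n → ℝ) (β : Fin n → ℝ)
    (α : Fin m → ℝ) (x : Fin m → ℝ) (y : Fin n → ℝ)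
    (hNE : IsNash A (fun i j => C i j + α i * β j) x y) :
    (∃! p : ℝ × ℝ, MemN A C β ((y, p.1), (x, ∑ i, α i * x i, p.2))) ∧
      MemN A C β ((y, ∑ i, ∑ j, x i * A i j * y j),
        (x, ∑ i, α i * x i, ∑ i, ∑ j, x i * (C i j + α i * β j) * y j)) := by
  classical
  obtain ⟨hx, hy, hN1, hN2⟩ := hNE
  set π₁ : ℝ := ∑ i, ∑ j, x i * A i j * y j with hπ₁
  set π₂ : ℝ := ∑ i, ∑ j, x i * (C i j + α i * β j) * y j with hπ₂
  set lam : ℝ := ∑ i, α i * x i with hlam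
  -- row bound: ∑ j, A i j * y j ≤ π₁
  have hrow : ∀ i, ∑ j, A i j * y j ≤ π₁ := by
    intro i
    have hsim : InSimplex (fun k => if k = i then (1:ℝ) else 0) := by
      constructor
      · intro k; dsimp only; split <;> norm_num
      · simp
    have := hN1 _ hsim
    calc ∑ j, A i j * y j
        = ∑ k, ∑ j, (if k = i then (1:ℝ) else 0) * A k j * y j := by
          rw [Finset.sum_eq_single i]
          · simp
          · intro k _ hk; simp [hk]
          · simp
      _ ≤ π₁ := this
  -- column bound: ∑ i, x i * C i j + β j * lam ≤ π₂
  have hcol : ∀ j, ∑ i, x i * C i j + β j * lam ≤ π₂ := by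
    intro j
    have hsim : InSimplex (fun k => if k = j then (1:ℝ) else 0) := by
      constructor
      · intro k; dsimp only; split <;> norm_num
      · simp
    have h := hN2 _ hsim
    calc ∑ i, x i * C i j + β j * lam
        = ∑ i, x i * (C i j + α i * β j) := (col_eq C β α x j).symm
      _ = ∑ i, ∑ k, x i * (C i k + α i * β k) * (if k = j then (1:ℝ) else 0) := by
          apply Finset.sum_congr rfl; intro i _
          rw [Finset.sum_eq_single j] <;> simp (config := {contextual := true})
      _ ≤ π₂ := h
  -- complementary slackness
  have hslack1 : ∀ i, x i = 0 ∨ ∑ j, A i j * y j = π₁ :=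
    cs_forward x (fun i => ∑ j, A i j * y j) π₁ hx.1 hrow hx.2
      ((pay_eq1 A x y).trans hπ₁.symm)
  have hslack2 : ∀ j, y j = 0 ∨ ∑ i, x i * C i j + β j * lam = π₂ :=
    cs_forward y (fun j => ∑ i, x i * C i j + β j * lam) π₂ hy.1 hcol hy.2
      ((pay_eq2 C β α x y).trans hπ₂.symm)
  -- membership
  have hmem : MemN A C β ((y, π₁), (x, lam, π₂)) := by
    refine ⟨⟨hrow, hy.1, hy.2⟩, ⟨hx.1, hcol, hx.2⟩, ?_⟩
    intro l
    rcases l with i | j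
    · rcases hslack1 i with h | h
      · exact Or.inr h
      · exact Or.inl h
    · rcases hslack2 j with h | h
      · exact Or.inl h
      · exact Or.inr h
  refine ⟨⟨(π₁, π₂), hmem, ?_⟩, hmem⟩
  rintro ⟨p₁, p₂⟩ ⟨hP, hQ, hlab⟩
  have h1 : π₁ = p₁ := by
    rw [hπ₁, ← pay_eq1 A x y]
    apply cs_backward x (fun i => ∑ j, A i j * y j) p₁ hx.2
    intro i
    rcases hlab (Sum.inl i) with h | h
    · exact Or.inr h
    · exact Or.inl h
  have h2 : π₂ = p₂ := by
    rw [hπ₂, ← pay_eq2 C β α x y]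
    apply cs_backward y (fun j => ∑ i, x i * C i j + β j * lam) p₂ hy.2
    intro j
    rcases hlab (Sum.inr j) with h | h
    · exact Or.inl h
    · exact Or.inr h
  simp [Prod.ext_iff, h1.symm, h2.symm]
end

section
/- E_Γ is a connected subset of (Fin m → ℝ) × (Fin m → ℝ) × (Fin n → ℝ) if and only if N is a connected subset of ((Fin n → ℝ) × ℝ) × ((Fin m → ℝ) × ℝ × ℝ) (both taken with the subspace topology of the ambient Euclidean spaces). -/
open Finset

namespace EGammaAux
variable {m n : ℕ}

lemma row_expand (A : Fin m → Fin n → ℝ) (x : Fin m → ℝ) (y : Fin n → ℝ) :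
    ∑ i, ∑ j, x i * A i j * y j = ∑ i, x i * ∑ j, A i j * y j := by
  refine Finset.sum_congr rfl fun i _ => ?_
  rw [Finset.mul_sum]
  exact Finset.sum_congr rfl fun j _ => by ring

lemma col_expand (C : Fin m → Fin n → ℝ) (β : Fin n → ℝ)
    (α x : Fin m → ℝ) (y : Fin n → ℝ) :
    ∑ i, ∑ j, x i * (C i j + α i * β j) * y j
      = ∑ j, (∑ i, x i * C i j + β j * ∑ i, x i * α i) * y j := by
  rw [Finset.sum_comm]
  refine Finset.sum_congr rfl fun j _ => ?_
  rw [add_mul, Finset.sum_mul, Finset.mul_sum, Finset.sum_mul, ← Finset.sum_add_distrib]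
  exact Finset.sum_congr rfl fun i _ => by ring

lemma single_simplex {d : ℕ} (i : Fin d) : InSimplex (Pi.single i (1:ℝ)) := by
  constructor
  · intro j
    rcases eq_or_ne j i with h | h
    · subst h; simp
    · simp [Pi.single_apply, h]
  · simp

lemma single_dot {d : ℕ} (i : Fin d) (g : Fin d → ℝ) :
    ∑ i', (Pi.single i (1:ℝ) : Fin d → ℝ) i' * g i' = g i := by
  simp [Pi.single_apply, ite_mul]

/-- The map from `E_Γ` to `N`. -/
noncomputable def Fmap (A C : Fin m → Fin n → ℝ) (β : Fin n → ℝ)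
    (p : (Fin m → ℝ) × (Fin m → ℝ) × (Fin n → ℝ)) :
    ((Fin n → ℝ) × ℝ) × ((Fin m → ℝ) × ℝ × ℝ) :=
  ((p.2.2, ∑ i, ∑ j, p.2.1 i * A i j * p.2.2 j),
   (p.2.1, ∑ i, p.2.1 i * p.1 i,
     ∑ i, ∑ j, p.2.1 i * (C i j + p.1 i * β j) * p.2.2 j))

/-- The map from `N` to `E_Γ`. -/
def Gmap (q : ((Fin n → ℝ) × ℝ) × ((Fin m → ℝ) × ℝ × ℝ)) :
    (Fin m → ℝ) × (Fin m → ℝ) × (Fin n → ℝ) :=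
  ((fun _ => q.2.2.1), q.2.1, q.1.1)

lemma Fmap_continuous (A C : Fin m → Fin n → ℝ) (β : Fin n → ℝ) :
    Continuous (Fmap A C β) := by
  unfold Fmap
  refine Continuous.prodMk (Continuous.prodMk ?_ ?_) (Continuous.prodMk ?_ (Continuous.prodMk ?_ ?_)) <;>
  · fun_prop

lemma Gmap_continuous : Continuous (Gmap (m := m) (n := n)) := by
  unfold Gmap; fun_prop

/-- Nash only depends on `α` through `∑ x i * α i`. -/
lemma nash_of_lam_eq (A C : Fin m → Fin n → ℝ) (β : Fin n → ℝ)
    {α α' x : Fin m → ℝ} {y : Fin n → ℝ}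
    (hxα : ∑ i, x i * α i = ∑ i, x i * α' i)
    (h : IsNash A (fun i j => C i j + α i * β j) x y) :
    IsNash A (fun i j => C i j + α' i * β j) x y := by
  obtain ⟨hx, hy, hr, hc⟩ := h
  refine ⟨hx, hy, hr, fun y' hy' => ?_⟩
  have := hc y' hy'
  rw [col_expand, col_expand, ← hxα, ← col_expand, ← col_expand]
  exact this

lemma Fmap_mem (A C : Fin m → Fin n → ℝ) (β : Fin n → ℝ)
    {p : (Fin m → ℝ) × (Fin m → ℝ) × (Fin n → ℝ)}
    (h : IsNash A (fun i j => C i j + p.1 i * β j) p.2.1 p.2.2) :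
    MemN A C β (Fmap A C β p) := by
  obtain ⟨α, x, y⟩ := p
  obtain ⟨⟨hx0, hx1⟩, ⟨hy0, hy1⟩, hr, hc⟩ := h
  simp only at hr hc hx0 hx1 hy0 hy1
  set v : ℝ := ∑ i, ∑ j, x i * A i j * y j with hv
  set w : ℝ := ∑ i, ∑ j, x i * (C i j + α i * β j) * y j with hw
  set l : ℝ := ∑ i, x i * α i with hl
  -- payoff bounds
  have hPv : ∀ i, ∑ j, A i j * y j ≤ v := by
    intro i
    have := hr (Pi.single i 1) (single_simplex i)
    rwa [row_expand, single_dot] at this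
  have hQw : ∀ j, ∑ i, x i * C i j + β j * l ≤ w := by
    intro j
    have := hc (Pi.single j 1) (single_simplex j)
    rw [col_expand] at this
    rw [show ∑ j', (∑ i, x i * C i j' + β j' * ∑ i, x i * α i) * (Pi.single j (1:ℝ) : Fin n → ℝ) j'
        = ∑ j', (Pi.single j (1:ℝ) : Fin n → ℝ) j' * (∑ i, x i * C i j' + β j' * ∑ i, x i * α i)
        from Finset.sum_congr rfl fun _ _ => mul_comm _ _, single_dot] at this
    exact this
  -- complementarity for rows
  have hvrow : v = ∑ i, x i * ∑ j, A i j * y j := row_expand A x y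
  have hrow0 : ∀ i ∈ Finset.univ, (0:ℝ) ≤ x i * (v - ∑ j, A i j * y j) := fun i _ =>
    mul_nonneg (hx0 i) (sub_nonneg.2 (hPv i))
  have hrowsum : ∑ i, x i * (v - ∑ j, A i j * y j) = 0 := by
    have : ∑ i, x i * (v - ∑ j, A i j * y j) = (∑ i, x i) * v - ∑ i, x i * ∑ j, A i j * y j := by
      rw [Finset.sum_mul, ← Finset.sum_sub_distrib]
      exact Finset.sum_congr rfl fun i _ => by ring
    rw [this, hx1, ← hvrow]; ring
  have hrowc : ∀ i, x i = 0 ∨ ∑ j, A i j * y j = v := by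
    intro i
    have := (Finset.sum_eq_zero_iff_of_nonneg hrow0).1 hrowsum i (Finset.mem_univ i)
    rcases mul_eq_zero.1 this with h | h
    · exact Or.inl h
    · exact Or.inr (by linarith [sub_eq_zero.1 h])
  -- complementarity for columns
  have hwcol : w = ∑ j, (∑ i, x i * C i j + β j * l) * y j := col_expand C β α x y
  have hcol0 : ∀ j ∈ Finset.univ, (0:ℝ) ≤ y j * (w - (∑ i, x i * C i j + β j * l)) := fun j _ =>
    mul_nonneg (hy0 j) (sub_nonneg.2 (hQw j))
  have hcolsum : ∑ j, y j * (w - (∑ i, x i * C i j + β j * l)) = 0 := by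
    have : ∑ j, y j * (w - (∑ i, x i * C i j + β j * l))
        = (∑ j, y j) * w - ∑ j, (∑ i, x i * C i j + β j * l) * y j := by
      rw [Finset.sum_mul, ← Finset.sum_sub_distrib]
      exact Finset.sum_congr rfl fun j _ => by ring
    rw [this, hy1, ← hwcol]; ring
  have hcolc : ∀ j, y j = 0 ∨ ∑ i, x i * C i j + β j * l = w := by
    intro j
    have := (Finset.sum_eq_zero_iff_of_nonneg hcol0).1 hcolsum j (Finset.mem_univ j)
    rcases mul_eq_zero.1 this with h | h
    · exact Or.inl h
    · exact Or.inr (by linarith [sub_eq_zero.1 h])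
  refine ⟨⟨hPv, hy0, hy1⟩, ⟨hx0, hQw, hx1⟩, ?_⟩
  rintro (i | j)
  · rcases hrowc i with h | h
    · exact Or.inr h
    · exact Or.inl h
  · rcases hcolc j with h | h
    · exact Or.inl h
    · exact Or.inr h

lemma Gmap_pay₁ (A C : Fin m → Fin n → ℝ) (β : Fin n → ℝ)
    {q : ((Fin n → ℝ) × ℝ) × ((Fin m → ℝ) × ℝ × ℝ)} (h : MemN A C β q) :
    ∑ i, ∑ j, q.2.1 i * A i j * q.1.1 j = q.1.2 := by
  obtain ⟨⟨y, π₁⟩, ⟨x, l, π₂⟩⟩ := q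
  obtain ⟨⟨hP1, hP2, hP3⟩, ⟨hQ1, hQ2, hQ3⟩, hlab⟩ := h
  simp only at hP1 hP2 hP3 hQ1 hQ2 hQ3 ⊢
  rw [row_expand]
  have : ∀ i ∈ Finset.univ, x i * ∑ j, A i j * y j = x i * π₁ := by
    intro i _
    rcases hlab (Sum.inl i) with h | h
    · simp only [LabelP, Set.mem_setOf_eq, Sum.elim_inl] at h; rw [h]
    · simp only [LabelQ', Set.mem_setOf_eq, Sum.elim_inl] at h; rw [h]; ring
  rw [Finset.sum_congr rfl this, ← Finset.sum_mul, hQ3, one_mul]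

lemma Gmap_pay₂ (A C : Fin m → Fin n → ℝ) (β : Fin n → ℝ)
    {q : ((Fin n → ℝ) × ℝ) × ((Fin m → ℝ) × ℝ × ℝ)} (h : MemN A C β q) :
    ∑ i, ∑ j, q.2.1 i * (C i j + q.2.2.1 * β j) * q.1.1 j = q.2.2.2 := by
  obtain ⟨⟨y, π₁⟩, ⟨x, l, π₂⟩⟩ := q
  obtain ⟨⟨hP1, hP2, hP3⟩, ⟨hQ1, hQ2, hQ3⟩, hlab⟩ := h
  simp only at hP1 hP2 hP3 hQ1 hQ2 hQ3 ⊢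
  rw [show (∑ i, ∑ j, x i * (C i j + l * β j) * y j)
      = ∑ i, ∑ j, x i * (C i j + (fun _ : Fin m => l) i * β j) * y j from rfl,
    col_expand]
  have hxl : ∑ i, x i * (fun _ : Fin m => l) i = l := by
    simp only
    rw [show (∑ i, x i * l) = (∑ i, x i) * l from (Finset.sum_mul ..).symm, hQ3, one_mul]
  rw [hxl]
  have : ∀ j ∈ Finset.univ, (∑ i, x i * C i j + β j * l) * y j = π₂ * y j := by
    intro j _
    rcases hlab (Sum.inr j) with h | h
    · simp only [LabelP, Set.mem_setOf_eq, Sum.elim_inr] at h; rw [h]; ring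
    · simp only [LabelQ', Set.mem_setOf_eq, Sum.elim_inr] at h; rw [h]
  rw [Finset.sum_congr rfl this, ← Finset.mul_sum, hP3, mul_one]

lemma Gmap_mem (A C : Fin m → Fin n → ℝ) (β : Fin n → ℝ)
    {q : ((Fin n → ℝ) × ℝ) × ((Fin m → ℝ) × ℝ × ℝ)} (h : MemN A C β q) :
    IsNash A (fun i j => C i j + (Gmap q).1 i * β j) (Gmap q).2.1 (Gmap q).2.2 := by
  have hpay₁ := Gmap_pay₁ A C β h
  have hpay₂ := Gmap_pay₂ A C β h
  obtain ⟨⟨y, π₁⟩, ⟨x, l, π₂⟩⟩ := q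
  obtain ⟨⟨hP1, hP2, hP3⟩, ⟨hQ1, hQ2, hQ3⟩, hlab⟩ := h
  simp only at hP1 hP2 hP3 hQ1 hQ2 hQ3 hpay₁ hpay₂
  simp only [Gmap]
  refine ⟨⟨hQ1, hQ3⟩, ⟨hP2, hP3⟩, ?_, ?_⟩
  · intro x' hx'
    rw [hpay₁, row_expand]
    calc ∑ i, x' i * ∑ j, A i j * y j ≤ ∑ i, x' i * π₁ :=
          Finset.sum_le_sum fun i _ => mul_le_mul_of_nonneg_left (hP1 i) (hx'.1 i)
      _ = π₁ := by rw [← Finset.sum_mul, hx'.2, one_mul]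
  · intro y' hy'
    rw [hpay₂, col_expand]
    have hxl : ∑ i, x i * l = l := by
      rw [show (∑ i, x i * l) = (∑ i, x i) * l from (Finset.sum_mul ..).symm, hQ3, one_mul]
    rw [hxl]
    calc ∑ j, (∑ i, x i * C i j + β j * l) * y' j ≤ ∑ j, π₂ * y' j :=
          Finset.sum_le_sum fun j _ => mul_le_mul_of_nonneg_right (hQ2 j) (hy'.1 j)
      _ = π₂ := by rw [← Finset.mul_sum, hy'.2, mul_one]

lemma Fmap_Gmap (A C : Fin m → Fin n → ℝ) (β : Fin n → ℝ)
    {q : ((Fin n → ℝ) × ℝ) × ((Fin m → ℝ) × ℝ × ℝ)} (h : MemN A C β q) :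
    Fmap A C β (Gmap q) = q := by
  have hpay₁ := Gmap_pay₁ A C β h
  have hpay₂ := Gmap_pay₂ A C β h
  have hxl : ∑ i, q.2.1 i * q.2.2.1 = q.2.2.1 := by
    rw [show (∑ i, q.2.1 i * q.2.2.1) = (∑ i, q.2.1 i) * q.2.2.1 from (Finset.sum_mul ..).symm,
      h.2.1.2.2, one_mul]
  simp only [Fmap, Gmap]
  exact Prod.ext (Prod.ext rfl hpay₁) (Prod.ext rfl (Prod.ext hxl hpay₂))

/-- Straight-line deformation of the `α`-coordinate towards the constant `∑ x i * α i`. -/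
def seg (p : (Fin m → ℝ) × (Fin m → ℝ) × (Fin n → ℝ)) (t : ℝ) :
    (Fin m → ℝ) × (Fin m → ℝ) × (Fin n → ℝ) :=
  ((fun i => (1 - t) * p.1 i + t * ∑ i', p.2.1 i' * p.1 i'), p.2)

lemma seg_continuous (p : (Fin m → ℝ) × (Fin m → ℝ) × (Fin n → ℝ)) :
    Continuous (seg p) := by
  unfold seg
  exact Continuous.prodMk (continuous_pi fun i => by fun_prop) continuous_const

lemma seg_zero (p : (Fin m → ℝ) × (Fin m → ℝ) × (Fin n → ℝ)) : seg p 0 = p := by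
  unfold seg
  exact Prod.ext (funext fun i => by ring) rfl

lemma seg_one (A C : Fin m → Fin n → ℝ) (β : Fin n → ℝ)
    (p : (Fin m → ℝ) × (Fin m → ℝ) × (Fin n → ℝ)) :
    seg p 1 = Gmap (Fmap A C β p) := by
  unfold seg Gmap Fmap
  exact Prod.ext (funext fun i => by simp) rfl

lemma lam_calc (x α : Fin m → ℝ) (t l : ℝ) :
    ∑ i, x i * ((1 - t) * α i + t * l)
      = (1 - t) * (∑ i, x i * α i) + t * l * (∑ i, x i) := by
  rw [Finset.mul_sum, Finset.mul_sum, ← Finset.sum_add_distrib]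
  exact Finset.sum_congr rfl fun i _ => by ring

lemma seg_mem (A C : Fin m → Fin n → ℝ) (β : Fin n → ℝ)
    {p : (Fin m → ℝ) × (Fin m → ℝ) × (Fin n → ℝ)}
    (h : IsNash A (fun i j => C i j + p.1 i * β j) p.2.1 p.2.2) (t : ℝ) :
    IsNash A (fun i j => C i j + (seg p t).1 i * β j) (seg p t).2.1 (seg p t).2.2 := by
  have hx1 : ∑ i, p.2.1 i = 1 := h.1.2
  refine nash_of_lam_eq A C β ?_ h
  show ∑ i, p.2.1 i * p.1 i
      = ∑ i, p.2.1 i * ((1 - t) * p.1 i + t * ∑ i', p.2.1 i' * p.1 i')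
  rw [lam_calc, hx1]; ring

end EGammaAux

/-- `E_Γ` is connected iff `N` is connected (subspace topologies). -/
theorem EGamma_connected_iff_N_connected {m n : ℕ} (hm : 1 ≤ m) (hn : 1 ≤ n)
    (A C : Fin m → Fin n → ℝ) (β : Fin n → ℝ) :
    IsConnected {p : (Fin m → ℝ) × (Fin m → ℝ) × (Fin n → ℝ) |
        IsNash A (fun i j => C i j + p.1 i * β j) p.2.1 p.2.2} ↔
      IsConnected {p : ((Fin n → ℝ) × ℝ) × ((Fin m → ℝ) × ℝ × ℝ) | MemN A C β p} := by
  open EGammaAux in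
  set S : Set ((Fin m → ℝ) × (Fin m → ℝ) × (Fin n → ℝ)) :=
    {p | IsNash A (fun i j => C i j + p.1 i * β j) p.2.1 p.2.2} with hSdef
  set T : Set (((Fin n → ℝ) × ℝ) × ((Fin m → ℝ) × ℝ × ℝ)) := {p | MemN A C β p} with hTdef
  have hGS : ∀ q ∈ T, Gmap q ∈ S := fun q hq => Gmap_mem A C β hq
  have hFS : ∀ p ∈ S, Fmap A C β p ∈ T := fun p hp => Fmap_mem A C β hp
  constructor
  · intro hS
    have himg : T = Fmap A C β '' S := by
      apply Set.Subset.antisymm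
      · intro q hq
        exact ⟨Gmap q, hGS q hq, Fmap_Gmap A C β hq⟩
      · rintro _ ⟨p, hp, rfl⟩
        exact hFS p hp
    rw [himg]
    exact hS.image _ (Fmap_continuous A C β).continuousOn
  · intro hT
    set K : Set ((Fin m → ℝ) × (Fin m → ℝ) × (Fin n → ℝ)) := Gmap '' T with hKdef
    have hK : IsConnected K := hT.image _ Gmap_continuous.continuousOn
    have hKS : K ⊆ S := by rintro _ ⟨q, hq, rfl⟩; exact hGS q hq
    obtain ⟨q₀, hq₀⟩ := hT.nonempty
    have hx₀K : Gmap q₀ ∈ K := ⟨q₀, hq₀, rfl⟩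
    have hSeq : S = ⋃ p : S, (Set.range (seg p.1) ∪ K) := by
      apply Set.Subset.antisymm
      · intro z hz
        refine Set.mem_iUnion.2 ⟨⟨z, hz⟩, Or.inl ⟨0, seg_zero z⟩⟩
      · intro z hz
        obtain ⟨p, hp⟩ := Set.mem_iUnion.1 hz
        rcases hp with ⟨t, rfl⟩ | hzK
        · exact seg_mem A C β p.2 t
        · exact hKS hzK
    refine ⟨⟨Gmap q₀, hKS hx₀K⟩, ?_⟩
    rw [hSeq]
    apply isPreconnected_iUnion
    · exact ⟨Gmap q₀, Set.mem_iInter.2 fun p => Or.inr hx₀K⟩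
    · rintro ⟨p, hp⟩
      refine (IsConnected.union ?_ (isConnected_range (seg_continuous p)) hK).isPreconnected
      refine ⟨seg p 1, ⟨1, rfl⟩, ?_⟩
      rw [seg_one A C β p]
      exact ⟨Fmap A C β p, hFS p hp, rfl⟩
end

section
/- Suppose P and Q' are nondegenerate, and let (v,w) ∈ N with label sets L(v), L(w). Then |L(v)| ≥ n − 1 and |L(w)| ≥ m, and moreover |L(v)| = n or |L(w)| = m + 1. In addition, if |L(v)| = n and |L(w)| = m + 1, then |L(v) ∩ L(w)| = 1. -/
open Finset

/-- for nondegenerate `P` and `Q'` and a fully-labeled pair `(v,w)`,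
`|L(v)| ≥ n − 1`, `|L(w)| ≥ m`, one of them attains its maximum, and if both do then
the label sets share exactly one (duplicate) label. -/
theorem fully_labeled_label_cards {m n : ℕ} (hm : 1 ≤ m) (hn : 1 ≤ n)
    (A C : Fin m → Fin n → ℝ) (β : Fin n → ℝ)
    (hP : ∀ v, MemP A v → (LabelP A v).ncard ≤ n)
    (hQ : ∀ w, MemQ' C β w → (LabelQ' C β w).ncard ≤ m + 1)
    (v : (Fin n → ℝ) × ℝ) (w : (Fin m → ℝ) × ℝ × ℝ)
    (hvw : MemN A C β (v, w)) :
    n - 1 ≤ (LabelP A v).ncard ∧ m ≤ (LabelQ' C β w).ncard ∧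
      ((LabelP A v).ncard = n ∨ (LabelQ' C β w).ncard = m + 1) ∧
      ((LabelP A v).ncard = n → (LabelQ' C β w).ncard = m + 1 →
        (LabelP A v ∩ LabelQ' C β w).ncard = 1) := by
  obtain ⟨hv, hw, hfull⟩ := hvw
  have ha := hP v hv
  have hb := hQ w hw
  have hunion : LabelP A v ∪ LabelQ' C β w = Set.univ := by
    ext l; simp [hfull l]
  have hcard : (LabelP A v ∪ LabelQ' C β w).ncard = m + n := by
    rw [hunion, Set.ncard_univ, Nat.card_eq_fintype_card]
    simp
  have key : (LabelP A v).ncard + (LabelQ' C β w).ncard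
      = m + n + (LabelP A v ∩ LabelQ' C β w).ncard := by
    rw [← hcard, Set.ncard_union_add_ncard_inter _ _ (Set.toFinite _) (Set.toFinite _)]
  omega
end

section
/- Suppose P is nondegenerate, and suppose j_s ∈ Fin n is the unique minimizer of j ↦ β j and j_e ∈ Fin n is the unique maximizer of j ↦ β j (with j_s ≠ j_e). Then there is a unique i_s ∈ Fin m maximizing i ↦ A i j_s and a unique i_e ∈ Fin m maximizing i ↦ A i j_e, and the points v_s = (e_{j_s}, A i_s j_s) and v_e = (e_{j_e}, A i_e j_e) belong to P, with tight-label sets L(v_s) = {i_s} ∪ {j ∈ Fin n | j ≠ j_s} and L(v_e) = {i_e} ∪ {j ∈ Fin n | j ≠ j_e}, each of cardinality n; in particular v_s and v_e are extreme points of P. -/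
open Finset

/-- The standard basis vector `e_j`. -/
def stdBasis {d : ℕ} (j : Fin d) : Fin d → ℝ := fun j' => if j' = j then 1 else 0

lemma sum_mul_std {n : ℕ} (f : Fin n → ℝ) (j : Fin n) :
    ∑ j', f j' * stdBasis j j' = f j := by
  simp [stdBasis, mul_ite]

lemma ncard_ne {n : ℕ} (hn : 1 ≤ n) (j : Fin n) :
    ({j' : Fin n | j' ≠ j}).ncard = n - 1 := by
  have h : ({j' : Fin n | j' ≠ j}) = ({j} : Set (Fin n))ᶜ := by ext; simp
  have h2 := Set.ncard_add_ncard_compl ({j} : Set (Fin n))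
  simp only [Set.ncard_singleton, Set.ncard_univ, Nat.card_eq_fintype_card, Fintype.card_fin] at h2
  rw [h]
  omega

lemma col_lemma {m n : ℕ} (hm : 1 ≤ m) (hn : 1 ≤ n) (A : Fin m → Fin n → ℝ)
    (hP : ∀ v, MemP A v → (LabelP A v).ncard ≤ n) (j : Fin n) :
    (∃! i0 : Fin m, ∀ i, A i j ≤ A i0 j) ∧
    ∀ i0 : Fin m, (∀ i, A i j ≤ A i0 j) →
      MemP A (stdBasis j, A i0 j) ∧
      LabelP A (stdBasis j, A i0 j) = {Sum.inl i0} ∪ Sum.inr '' {j' : Fin n | j' ≠ j} ∧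
      (LabelP A (stdBasis j, A i0 j)).ncard = n ∧
      (stdBasis j, A i0 j) ∈ Set.extremePoints ℝ {v | MemP A v} := by
  have hmem : ∀ i0 : Fin m, (∀ i, A i j ≤ A i0 j) → MemP A (stdBasis j, A i0 j) := by
    intro i0 h0
    refine ⟨fun i => ?_, fun j' => ?_, ?_⟩
    · rw [sum_mul_std]; exact h0 i
    · simp only [stdBasis]; split <;> norm_num
    · simp [stdBasis]
  have huniq : ∀ i0 i1 : Fin m, (∀ i, A i j ≤ A i0 j) → (∀ i, A i j ≤ A i1 j) → i0 = i1 := by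
    intro i0 i1 h0 h1
    by_contra hne
    have hval : A i1 j = A i0 j := le_antisymm (h0 i1) (h1 i0)
    have hsub : ({Sum.inl i0, Sum.inl i1} ∪ Sum.inr '' {j' : Fin n | j' ≠ j} : Set (Fin m ⊕ Fin n))
        ⊆ LabelP A (stdBasis j, A i0 j) := by
      rintro l (hl | ⟨j', hj', rfl⟩)
      · rcases hl with rfl | rfl
        · show (∑ j', A i0 j' * stdBasis j j') = A i0 j
          rw [sum_mul_std]
        · show (∑ j', A i1 j' * stdBasis j j') = A i0 j
          rw [sum_mul_std]; exact hval
      · have hj2 : j' ≠ j := hj'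
        show stdBasis j j' = 0
        simp [stdBasis, hj2]
    have hdisj : Disjoint ({Sum.inl i0, Sum.inl i1} : Set (Fin m ⊕ Fin n))
        (Sum.inr '' {j' : Fin n | j' ≠ j}) := by
      rw [Set.disjoint_left]
      rintro l (rfl | rfl) ⟨j', _, h⟩ <;> exact Sum.inl_ne_inr h.symm
    have hcard : ({Sum.inl i0, Sum.inl i1} ∪ Sum.inr '' {j' : Fin n | j' ≠ j} :
        Set (Fin m ⊕ Fin n)).ncard = n + 1 := by
      rw [Set.ncard_union_eq hdisj (Set.toFinite _) (Set.toFinite _),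
        Set.ncard_pair (by simpa using hne),
        Set.ncard_image_of_injective _ Sum.inr_injective, ncard_ne hn]
      omega
    have h1 := Set.ncard_le_ncard hsub (Set.toFinite _)
    have h2 := hP _ (hmem i0 h0)
    omega
  have hex : ∃ i0 : Fin m, ∀ i, A i j ≤ A i0 j := by
    obtain ⟨i0, -, h⟩ := Finset.exists_max_image Finset.univ (fun i => A i j)
      ⟨⟨0, hm⟩, mem_univ _⟩
    exact ⟨i0, fun i => h i (mem_univ _)⟩
  obtain ⟨iw, hiw⟩ := hex
  refine ⟨⟨iw, hiw, fun i1 h1 => (huniq iw i1 hiw h1).symm⟩, ?_⟩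
  intro i0 h0
  have hlab : LabelP A (stdBasis j, A i0 j)
      = {Sum.inl i0} ∪ Sum.inr '' {j' : Fin n | j' ≠ j} := by
    ext l
    cases l with
    | inl i =>
      simp only [LabelP, Set.mem_setOf_eq, Sum.elim_inl, Set.mem_union, Set.mem_singleton_iff,
        Set.mem_image, sum_mul_std]
      constructor
      · intro h
        left
        have : ∀ i', A i' j ≤ A i j := fun i' => (h0 i').trans_eq h.symm
        exact congrArg Sum.inl (huniq i i0 this h0)
      · rintro (h | ⟨j', _, h⟩)
        · rw [Sum.inl.injEq] at h; rw [h]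
        · exact absurd h (Sum.inr_ne_inl)
    | inr j' =>
      simp only [LabelP, Set.mem_setOf_eq, Sum.elim_inr, Set.mem_union, Set.mem_singleton_iff,
        Set.mem_image, stdBasis]
      constructor
      · intro h
        right
        refine ⟨j', ?_, rfl⟩
        intro hj; rw [if_pos hj] at h; norm_num at h
      · rintro (h | ⟨j'', hj'', h⟩)
        · exact absurd h (Sum.inr_ne_inl)
        · rw [Sum.inr.injEq] at h; subst h
          rw [if_neg hj'']
  have hcardn : (LabelP A (stdBasis j, A i0 j)).ncard = n := by
    rw [hlab]
    have hdisj : Disjoint ({Sum.inl i0} : Set (Fin m ⊕ Fin n))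
        (Sum.inr '' {j' : Fin n | j' ≠ j}) := by
      rw [Set.disjoint_left]
      rintro l rfl ⟨j', _, h⟩; exact Sum.inl_ne_inr h.symm
    rw [Set.ncard_union_eq hdisj (Set.toFinite _) (Set.toFinite _), Set.ncard_singleton,
      Set.ncard_image_of_injective _ Sum.inr_injective, ncard_ne hn]
    omega
  refine ⟨hmem i0 h0, hlab, hcardn, ?_⟩
  refine ⟨hmem i0 h0, ?_⟩
  rintro x hx y hy ⟨a, b, ha, hb, hab, heq⟩
  have hfst : ∀ j', a * x.1 j' + b * y.1 j' = stdBasis j j' := by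
    intro j'
    have := congrArg (fun v : (Fin n → ℝ) × ℝ => v.1 j') heq
    simpa using this
  have hsnd : a * x.2 + b * y.2 = A i0 j := by
    have := congrArg Prod.snd heq
    simpa using this
  have hx0 : ∀ j', j' ≠ j → x.1 j' = 0 := by
    intro j' hj'
    have h := hfst j'
    rw [show stdBasis j j' = 0 by simp [stdBasis, hj']] at h
    have h1 : a * x.1 j' = 0 := by
      have := mul_nonneg ha.le (hx.2.1 j')
      have := mul_nonneg hb.le (hy.2.1 j')
      linarith
    rcases mul_eq_zero.mp h1 with h | h
    · exact absurd h ha.ne'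
    · exact h
  have hy0 : ∀ j', j' ≠ j → y.1 j' = 0 := by
    intro j' hj'
    have h := hfst j'
    rw [show stdBasis j j' = 0 by simp [stdBasis, hj']] at h
    have h1 : b * y.1 j' = 0 := by
      have := mul_nonneg ha.le (hx.2.1 j')
      have := mul_nonneg hb.le (hy.2.1 j')
      linarith
    rcases mul_eq_zero.mp h1 with h | h
    · exact absurd h hb.ne'
    · exact h
  have hx1 : x.1 = stdBasis j := by
    have hsum : ∑ j', x.1 j' = x.1 j :=
      Finset.sum_eq_single j (fun j' _ hj' => hx0 j' hj') (by simp)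
    funext j'
    by_cases hj' : j' = j
    · subst hj'
      rw [show stdBasis j' j' = 1 by simp [stdBasis]]
      rw [← hsum]; exact hx.2.2
    · rw [hx0 j' hj']; simp [stdBasis, hj']
  have hy1 : y.1 = stdBasis j := by
    have hsum : ∑ j', y.1 j' = y.1 j :=
      Finset.sum_eq_single j (fun j' _ hj' => hy0 j' hj') (by simp)
    funext j'
    by_cases hj' : j' = j
    · subst hj'
      rw [show stdBasis j' j' = 1 by simp [stdBasis]]
      rw [← hsum]; exact hy.2.2
    · rw [hy0 j' hj']; simp [stdBasis, hj']
  have hxge : A i0 j ≤ x.2 := by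
    have := hx.1 i0
    rwa [hx1, sum_mul_std] at this
  have hyge : A i0 j ≤ y.2 := by
    have := hy.1 i0
    rwa [hy1, sum_mul_std] at this
  have e : a * (x.2 - A i0 j) + b * (y.2 - A i0 j) = 0 := by
    linear_combination hsnd - A i0 j * hab
  have t1 := mul_nonneg ha.le (sub_nonneg.2 hxge)
  have t2 := mul_nonneg hb.le (sub_nonneg.2 hyge)
  have hx2 : x.2 = A i0 j := by
    have h1 : a * (x.2 - A i0 j) = 0 := by linarith
    rcases mul_eq_zero.mp h1 with h | h
    · exact absurd h ha.ne'
    · linarith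
  have hy2 : y.2 = A i0 j := by
    have h1 : b * (y.2 - A i0 j) = 0 := by linarith
    rcases mul_eq_zero.mp h1 with h | h
    · exact absurd h hb.ne'
    · linarith
  exact Prod.ext hx1 hx2

/-- for nondegenerate `P`, if `j_s` (resp. `j_e`) is the unique minimizer
(resp. maximizer) of `β`, then the columns `j_s, j_e` have unique best responses
`i_s, i_e`, and the corresponding points `v_s, v_e` lie in `P`, have the stated
tight-label sets of cardinality `n`, and are extreme points of `P`. -/
theorem exists_endpoints_vs_ve {m n : ℕ} (hm : 1 ≤ m) (hn : 1 ≤ n)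
    (A : Fin m → Fin n → ℝ) (β : Fin n → ℝ)
    (hP : ∀ v, MemP A v → (LabelP A v).ncard ≤ n)
    (j_s j_e : Fin n) (hse : j_s ≠ j_e)
    (hjs : ∀ j, j ≠ j_s → β j_s < β j)
    (hje : ∀ j, j ≠ j_e → β j < β j_e) :
    (∃! i_s : Fin m, ∀ i, A i j_s ≤ A i_s j_s) ∧
    (∃! i_e : Fin m, ∀ i, A i j_e ≤ A i_e j_e) ∧
    ∀ i_s i_e : Fin m, (∀ i, A i j_s ≤ A i_s j_s) → (∀ i, A i j_e ≤ A i_e j_e) →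
      MemP A (stdBasis j_s, A i_s j_s) ∧ MemP A (stdBasis j_e, A i_e j_e) ∧
      LabelP A (stdBasis j_s, A i_s j_s)
        = {Sum.inl i_s} ∪ Sum.inr '' {j : Fin n | j ≠ j_s} ∧
      LabelP A (stdBasis j_e, A i_e j_e)
        = {Sum.inl i_e} ∪ Sum.inr '' {j : Fin n | j ≠ j_e} ∧
      (LabelP A (stdBasis j_s, A i_s j_s)).ncard = n ∧
      (LabelP A (stdBasis j_e, A i_e j_e)).ncard = n ∧
      (stdBasis j_s, A i_s j_s) ∈ Set.extremePoints ℝ {v | MemP A v} ∧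
      (stdBasis j_e, A i_e j_e) ∈ Set.extremePoints ℝ {v | MemP A v} := by
  obtain ⟨hs1, hs2⟩ := col_lemma hm hn A hP j_s
  obtain ⟨he1, he2⟩ := col_lemma hm hn A hP j_e
  refine ⟨hs1, he1, ?_⟩
  intro i_s i_e hs he
  obtain ⟨m1, l1, c1, e1⟩ := hs2 i_s hs
  obtain ⟨m2, l2, c2, e2⟩ := he2 i_e he
  exact ⟨m1, m2, l1, l2, c1, c2, e1, e2⟩
end

section
/- Suppose β j_s < β j for all j ≠ j_s, and suppose i_s ∈ Fin m is the unique maximizer of i ↦ A i j_s. Let λ_s = min over j ≠ j_s of (C i_s j_s − C i_s j) / (β j − β j_s), and let v_s = (e_{j_s}, A i_s j_s) ∈ P. Then for (x,λ,π₂) ∈ (Fin m → ℝ) × ℝ × ℝ, the pair (v_s, (x,λ,π₂)) is a fully-labeled pair of P × Q' if and only if x = e_{i_s}, π₂ = C i_s j_s + β j_s * λ, and λ ≤ λ_s. -/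
open Finset

/-- characterization of the fully-labeled pairs whose `P`-component is the
endpoint vertex `v_s = (e_{j_s}, A i_s j_s)`: they are exactly the points with
`x = e_{i_s}`, `π₂ = C i_s j_s + β j_s * λ` and `λ ≤ λ_s`. -/
theorem fully_labeled_with_vs {m n : ℕ} (hm : 1 ≤ m) (hn : 2 ≤ n)
    (A C : Fin m → Fin n → ℝ) (β : Fin n → ℝ) (j_s : Fin n)
    (hβ : ∀ j, j ≠ j_s → β j_s < β j)
    (i_s : Fin m) (his : ∀ i, i ≠ i_s → A i j_s < A i_s j_s)
    (x : Fin m → ℝ) (lam π₂ : ℝ) :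
    MemN A C β ((stdBasis j_s, A i_s j_s), (x, lam, π₂)) ↔
      x = stdBasis i_s ∧ π₂ = C i_s j_s + β j_s * lam ∧
        lam ≤ (Finset.univ.erase j_s).inf'
          (by
            obtain ⟨j', hj'⟩ :=
              Fintype.exists_ne_of_one_lt_card (by rw [Fintype.card_fin]; omega) j_s
            exact ⟨j', Finset.mem_erase.mpr ⟨hj', Finset.mem_univ _⟩⟩)
          (fun j => (C i_s j_s - C i_s j) / (β j - β j_s)) := by
  have hsumA : ∀ i, ∑ j, A i j * stdBasis j_s j = A i j_s := by
    intro i; simp [stdBasis, mul_ite]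
  have hsumC : ∀ j, ∑ i, stdBasis i_s i * C i j = C i_s j := by
    intro j; simp [stdBasis, ite_mul]
  constructor
  · rintro ⟨hP, ⟨hx0, hineq, hsum⟩, hlab⟩
    dsimp only at hx0 hineq hsum
    have hx : ∀ i, i ≠ i_s → x i = 0 := by
      intro i hi
      rcases hlab (Sum.inl i) with h | h
      · exfalso
        simp only [LabelP, Set.mem_setOf_eq, Sum.elim_inl] at h
        rw [hsumA] at h
        exact absurd h (ne_of_lt (his i hi))
      · exact h
    have hxeq : x = stdBasis i_s := by
      have hxs : x i_s = 1 := by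
        have := hsum
        rwa [Finset.sum_eq_single i_s (fun b _ hb => hx b hb) (by simp)] at this
      funext i
      by_cases hi : i = i_s
      · subst hi; simp [stdBasis, hxs]
      · simp [stdBasis, hi, hx i hi]
    have hπ : π₂ = C i_s j_s + β j_s * lam := by
      rcases hlab (Sum.inr j_s) with h | h
      · exfalso
        simp only [LabelP, Set.mem_setOf_eq, Sum.elim_inr, stdBasis] at h
        norm_num at h
      · simp only [LabelQ', Set.mem_setOf_eq, Sum.elim_inr] at h
        rw [hxeq, hsumC] at h
        exact h.symm
    refine ⟨hxeq, hπ, ?_⟩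
    rw [Finset.le_inf'_iff]
    intro j hj
    have hjne : j ≠ j_s := (Finset.mem_erase.mp hj).1
    have hβj : 0 < β j - β j_s := sub_pos.mpr (hβ j hjne)
    have h := hineq j
    rw [hxeq, hsumC, hπ] at h
    rw [le_div_iff₀ hβj]
    nlinarith
  · rintro ⟨hxeq, hπ, hlam⟩
    subst hxeq hπ
    have hQineq : ∀ j, ∑ i, stdBasis i_s i * C i j + β j * lam ≤ C i_s j_s + β j_s * lam := by
      intro j
      rw [hsumC]
      by_cases hj : j = j_s
      · subst hj; exact le_refl _
      · have hβj : 0 < β j - β j_s := sub_pos.mpr (hβ j hj)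
        have := (Finset.le_inf'_iff _ _).mp hlam j (Finset.mem_erase.mpr ⟨hj, Finset.mem_univ _⟩)
        rw [le_div_iff₀ hβj] at this
        nlinarith
    refine ⟨⟨?_, ?_, ?_⟩, ⟨?_, hQineq, ?_⟩, ?_⟩
    · intro i
      rw [hsumA]
      by_cases hi : i = i_s
      · subst hi; exact le_refl _
      · exact (his i hi).le
    · intro j; simp [stdBasis]; positivity
    · simp [stdBasis]
    · intro i; simp [stdBasis]; positivity
    · simp [stdBasis]
    · rintro (i | j)
      · by_cases hi : i = i_s
        · subst hi
          left
          simp only [LabelP, Set.mem_setOf_eq, Sum.elim_inl]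
          exact hsumA _
        · right
          simp only [LabelQ', Set.mem_setOf_eq, Sum.elim_inl, stdBasis]
          simp [hi]
      · by_cases hj : j = j_s
        · subst hj
          right
          simp only [LabelQ', Set.mem_setOf_eq, Sum.elim_inr]
          rw [hsumC]
        · left
          simp only [LabelP, Set.mem_setOf_eq, Sum.elim_inr, stdBasis]
          simp [hj]
end

section
/- Let (A,B) be a bimatrix game whose best-response polytopes P and Q are nondegenerate. Then the set of Nash equilibria of (A,B) is finite and has odd cardinality. -/
set_option linter.unusedSectionVars false
set_option linter.unusedVariables false
set_option maxHeartbeats 1000000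

open Finset

namespace LH

section Generic

variable {ι : Type*} [Fintype ι] [DecidableEq ι] {d : ℕ}

/-- dot product of constraint row `c` with a vector. -/
def sdot (a : ι → Fin d → ℝ) (c : ι) (x : Fin d → ℝ) : ℝ := ∑ t, a c t * x t

/-- feasibility for the system `a x ≤ b`. -/
def Feas (a : ι → Fin d → ℝ) (b : ι → ℝ) (x : Fin d → ℝ) : Prop := ∀ c, sdot a c x ≤ b c

open Classical in
/-- tight labels. -/
noncomputable def Lab (a : ι → Fin d → ℝ) (b : ι → ℝ) (x : Fin d → ℝ) : Finset ι :=
  Finset.univ.filter (fun c => sdot a c x = b c)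

variable {a : ι → Fin d → ℝ} {b : ι → ℝ}

lemma mem_Lab {x : Fin d → ℝ} {c : ι} : c ∈ Lab a b x ↔ sdot a c x = b c := by
  classical simp [Lab]

lemma sdot_add_smul (c : ι) (x dir : Fin d → ℝ) (t : ℝ) :
    sdot a c (x + t • dir) = sdot a c x + t * sdot a c dir := by
  simp only [sdot, Pi.add_apply, Pi.smul_apply, smul_eq_mul, mul_add, Finset.sum_add_distrib,
    Finset.mul_sum]
  exact congrArg _ (Finset.sum_congr rfl (fun i _ => by ring))

lemma sdot_sub (c : ι) (x y : Fin d → ℝ) :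
    sdot a c (x - y) = sdot a c x - sdot a c y := by
  simp only [sdot, Pi.sub_apply, mul_sub, Finset.sum_sub_distrib]

lemma sdot_smul (c : ι) (r : ℝ) (x : Fin d → ℝ) : sdot a c (r • x) = r * sdot a c x := by
  simp only [sdot, Pi.smul_apply, smul_eq_mul, Finset.mul_sum]
  exact Finset.sum_congr rfl (fun i _ => by ring)

lemma sdot_neg (c : ι) (x : Fin d → ℝ) : sdot a c (-x) = -sdot a c x := by
  simp only [sdot, Pi.neg_apply, mul_neg, Finset.sum_neg_distrib]

end Generic

end LH

namespace LH

section Generic2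

set_option maxHeartbeats 800000

variable {ι : Type*} [Fintype ι] [DecidableEq ι] {d : ℕ}
variable {a : ι → Fin d → ℝ} {b : ι → ℝ}

/-- No feasible ray assumption. -/
def NoRay (a : ι → Fin d → ℝ) (b : ι → ℝ) : Prop :=
  ∀ x dir, Feas a b x → (∀ t : ℝ, 0 ≤ t → Feas a b (x + t • dir)) → dir = 0

/-- Nondegeneracy. -/
def Nondeg (a : ι → Fin d → ℝ) (b : ι → ℝ) : Prop :=
  ∀ x, Feas a b x → (Lab a b x).card ≤ d

lemma exit (hray : NoRay a b) {x dir : Fin d → ℝ} (hx : Feas a b x) (hdir : dir ≠ 0)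
    {M : Finset ι} (hMt : M ⊆ Lab a b x) (hM : ∀ c ∈ M, sdot a c dir = 0) :
    ∃ t : ℝ, 0 ≤ t ∧ Feas a b (x + t • dir) ∧ M ⊆ Lab a b (x + t • dir) ∧
      ∃ c, c ∉ M ∧ 0 < sdot a c dir ∧ c ∈ Lab a b (x + t • dir) := by
  classical
  set Cp : Finset ι := Finset.univ.filter (fun c => 0 < sdot a c dir) with hCp
  have hne : Cp.Nonempty := by
    by_contra h
    have hall : ∀ c, sdot a c dir ≤ 0 := by
      intro c
      by_contra hc
      exact h ⟨c, by simp [hCp, lt_of_not_ge hc]⟩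
    have : ∀ t : ℝ, 0 ≤ t → Feas a b (x + t • dir) := by
      intro t ht c
      rw [sdot_add_smul]
      have : t * sdot a c dir ≤ 0 := mul_nonpos_of_nonneg_of_nonpos ht (hall c)
      linarith [hx c]
    exact hdir (hray x dir hx this)
  set r : ι → ℝ := fun c => (b c - sdot a c x) / sdot a c dir with hr
  obtain ⟨c0, hc0, hmineq⟩ := Finset.exists_mem_eq_inf' hne r
  set t := Cp.inf' hne r with ht
  have hc0pos : 0 < sdot a c0 dir := by
    have := hc0; simp [hCp] at this; exact this
  have ht0 : 0 ≤ t := by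
    rw [hmineq, hr]
    exact div_nonneg (by linarith [hx c0]) hc0pos.le
  have hfeas : Feas a b (x + t • dir) := by
    intro c
    rw [sdot_add_smul]
    by_cases hc : 0 < sdot a c dir
    · have hmem : c ∈ Cp := by simp [hCp, hc]
      have : t ≤ r c := Finset.inf'_le r hmem
      have : t * sdot a c dir ≤ b c - sdot a c x := by
        rw [hr] at this
        calc t * sdot a c dir ≤ ((b c - sdot a c x) / sdot a c dir) * sdot a c dir :=
              mul_le_mul_of_nonneg_right this hc.le
          _ = b c - sdot a c x := div_mul_cancel₀ _ hc.ne'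
      linarith
    · have : t * sdot a c dir ≤ 0 :=
        mul_nonpos_of_nonneg_of_nonpos ht0 (le_of_not_gt hc)
      linarith [hx c]
  refine ⟨t, ht0, hfeas, ?_, c0, ?_, hc0pos, ?_⟩
  · intro c hc
    rw [mem_Lab, sdot_add_smul, hM c hc, mul_zero, add_zero]
    exact mem_Lab.1 (hMt hc)
  · intro hmem
    exact hc0pos.ne' (hM c0 hmem)
  · rw [mem_Lab, sdot_add_smul, hmineq, hr]
    field_simp
    ring

lemma localmove (hx : Feas a b x) {dir : Fin d → ℝ}
    (h0 : ∀ c ∈ Lab a b x, sdot a c dir = 0) :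
    ∃ t : ℝ, 0 < t ∧ Feas a b (x + t • dir) ∧ Lab a b x ⊆ Lab a b (x + t • dir) := by
  classical
  set Cp : Finset ι := Finset.univ.filter (fun c => 0 < sdot a c dir) with hCp
  set r : ι → ℝ := fun c => (b c - sdot a c x) / sdot a c dir with hr
  have hrpos : ∀ c ∈ Cp, 0 < r c := by
    intro c hc
    have hcpos : 0 < sdot a c dir := by simpa [hCp] using hc
    have hcl : c ∉ Lab a b x := fun hmem => hcpos.ne' (h0 c hmem)
    have : sdot a c x < b c := lt_of_le_of_ne (hx c) (by simpa [mem_Lab] using hcl)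
    exact div_pos (by linarith) hcpos
  by_cases hne : Cp.Nonempty
  · set t := Cp.inf' hne r with ht
    obtain ⟨c0, hc0, hmineq⟩ := Finset.exists_mem_eq_inf' hne r
    have ht0 : 0 < t := by rw [ht, hmineq]; exact hrpos c0 hc0
    refine ⟨t, ht0, ?_, ?_⟩
    · intro c
      rw [sdot_add_smul]
      by_cases hc : 0 < sdot a c dir
      · have hmem : c ∈ Cp := by simp [hCp, hc]
        have hle : t ≤ r c := Finset.inf'_le r hmem
        have : t * sdot a c dir ≤ b c - sdot a c x := by
          calc t * sdot a c dir ≤ r c * sdot a c dir := mul_le_mul_of_nonneg_right hle hc.le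
            _ = b c - sdot a c x := div_mul_cancel₀ _ hc.ne'
        linarith
      · have : t * sdot a c dir ≤ 0 :=
          mul_nonpos_of_nonneg_of_nonpos ht0.le (le_of_not_gt hc)
        linarith [hx c]
    · intro c hc
      rw [mem_Lab, sdot_add_smul, h0 c hc, mul_zero, add_zero]
      exact mem_Lab.1 hc
  · refine ⟨1, one_pos, ?_, ?_⟩
    · intro c
      have hc : ¬ 0 < sdot a c dir := fun h => hne ⟨c, by simp [hCp, h]⟩
      rw [sdot_add_smul]
      have : (1:ℝ) * sdot a c dir ≤ 0 := by
        rw [one_mul]; exact le_of_not_gt hc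
      linarith [hx c]
    · intro c hc
      rw [mem_Lab, sdot_add_smul, h0 c hc, mul_zero, add_zero]
      exact mem_Lab.1 hc

lemma unique_of_card (hray : NoRay a b) (hnd : Nondeg a b)
    {M : Finset ι} (hMcard : d ≤ M.card) {u u' : Fin d → ℝ} (hu : Feas a b u)
    (hu' : Feas a b u') (h1 : M ⊆ Lab a b u) (h2 : M ⊆ Lab a b u') : u = u' := by
  by_contra hne
  have hdir : u' - u ≠ 0 := sub_ne_zero.2 (Ne.symm hne)
  have hM : ∀ c ∈ M, sdot a c (u' - u) = 0 := by
    intro c hc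
    rw [sdot_sub, mem_Lab.1 (h1 hc), mem_Lab.1 (h2 hc), sub_self]
  obtain ⟨t, -, hfeas, hsub, c, hcM, -, hcLab⟩ := exit hray hu hdir h1 hM
  have hins : insert c M ⊆ Lab a b (u + t • (u' - u)) := by
    intro e he
    rcases Finset.mem_insert.1 he with rfl | he
    · exact hcLab
    · exact hsub he
  have := Finset.card_le_card hins
  rw [Finset.card_insert_of_notMem hcM] at this
  have := hnd _ hfeas
  omega

end Generic2

end LH

namespace LH

section Generic3

set_option maxHeartbeats 800000
set_option linter.unusedVariables false

variable {ι : Type*} [Fintype ι] [DecidableEq ι] {d : ℕ}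
variable {a : ι → Fin d → ℝ} {b : ι → ℝ}

lemma sdot_add (c : ι) (x y : Fin d → ℝ) : sdot a c (x + y) = sdot a c x + sdot a c y := by
  simp only [sdot, Pi.add_apply, mul_add, Finset.sum_add_distrib]

/-- `sdot` as a linear map. -/
noncomputable def sdotL (a : ι → Fin d → ℝ) (c : ι) : (Fin d → ℝ) →ₗ[ℝ] ℝ where
  toFun := sdot a c
  map_add' x y := sdot_add c x y
  map_smul' r x := by simp [sdot_smul]

lemma exists_null_dir {M : Finset ι} (hM : M.card < d) :
    ∃ dir : Fin d → ℝ, dir ≠ 0 ∧ ∀ c ∈ M, sdot a c dir = 0 := by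
  classical
  by_contra h
  push_neg at h
  set L : (Fin d → ℝ) →ₗ[ℝ] ({c // c ∈ M} → ℝ) :=
    LinearMap.pi (fun c : {c // c ∈ M} => sdotL a c.1) with hL
  have hker : LinearMap.ker L = ⊥ := by
    rw [LinearMap.ker_eq_bot']
    intro v hv
    by_contra hv0
    obtain ⟨c, hc, hsc⟩ := h v hv0
    have : L v ⟨c, hc⟩ = 0 := by rw [hv]; rfl
    exact hsc this
  have hinj : Function.Injective L := LinearMap.ker_eq_bot.1 hker
  have hle := LinearMap.finrank_le_finrank_of_injective hinj
  rw [Module.finrank_fin_fun] at hle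
  have : Module.finrank ℝ ({c // c ∈ M} → ℝ) = M.card := by
    rw [Module.finrank_pi]
    simp
  omega

end Generic3

end LH

namespace LH

section Generic4

set_option maxHeartbeats 1000000
set_option linter.unusedVariables false

variable {ι : Type*} [Fintype ι] [DecidableEq ι] {d : ℕ}
variable {a : ι → Fin d → ℝ} {b : ι → ℝ}

lemma pivot_exists (hray : NoRay a b) (hnd : Nondeg a b) {v : Fin d → ℝ} (hv : Feas a b v)
    (hcard : (Lab a b v).card = d) {l : ι} (hl : l ∈ Lab a b v) :
    ∃ v', Feas a b v' ∧ v' ≠ v ∧ (Lab a b v).erase l ⊆ Lab a b v' ∧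
      (Lab a b v').card = d ∧ l ∉ Lab a b v' := by
  classical
  have hd1 : 1 ≤ d := by
    have := Finset.card_pos.2 ⟨l, hl⟩; omega
  have hMcard : ((Lab a b v).erase l).card < d := by
    rw [Finset.card_erase_of_mem hl, hcard]; omega
  obtain ⟨dir0, hdir0, hnull⟩ := exists_null_dir (a := a) hMcard
  by_cases hz : sdot a l dir0 = 0
  · -- all labels null: exit gives a point with d+1 labels, contradiction
    exfalso
    have hallnull : ∀ c ∈ Lab a b v, sdot a c dir0 = 0 := by
      intro c hc
      by_cases hcl : c = l
      · rw [hcl]; exact hz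
      · exact hnull c (Finset.mem_erase.2 ⟨hcl, hc⟩)
    obtain ⟨t, -, hfeas, hsub, c, hcM, -, hcLab⟩ :=
      exit hray hv hdir0 (Finset.Subset.refl _) hallnull
    have hins : insert c (Lab a b v) ⊆ Lab a b (v + t • dir0) := by
      intro e he
      rcases Finset.mem_insert.1 he with rfl | he
      · exact hcLab
      · exact hsub he
    have h1 := Finset.card_le_card hins
    rw [Finset.card_insert_of_notMem hcM] at h1
    have h2 := hnd _ hfeas
    omega
  · -- choose direction with sdot a l dir < 0
    set dir := if sdot a l dir0 < 0 then dir0 else -dir0 with hdirdef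
    have hdir : dir ≠ 0 := by
      rw [hdirdef]; split
      · exact hdir0
      · exact neg_ne_zero.2 hdir0
    have hneg : sdot a l dir < 0 := by
      rw [hdirdef]; split
      · assumption
      · rw [sdot_neg]
        rcases lt_trichotomy (sdot a l dir0) 0 with h | h | h
        · exact absurd h (by assumption)
        · exact absurd h hz
        · linarith
    have hnull' : ∀ c ∈ (Lab a b v).erase l, sdot a c dir = 0 := by
      intro c hc
      rw [hdirdef]; split
      · exact hnull c hc
      · rw [sdot_neg, hnull c hc, neg_zero]
    have hMt : (Lab a b v).erase l ⊆ Lab a b v := Finset.erase_subset _ _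
    obtain ⟨t, ht0, hfeas, hsub, c, hcM, hcpos, hcLab⟩ := exit hray hv hdir hMt hnull'
    have htpos : 0 < t := by
      rcases lt_or_eq_of_le ht0 with h | h
      · exact h
      · exfalso
        have hzv : v + t • dir = v := by rw [← h]; simp
        rw [hzv] at hcLab
        have hcl : c ≠ l := by
          intro hcl; rw [hcl] at hcpos; linarith
        exact hcM (Finset.mem_erase.2 ⟨hcl, hcLab⟩)
    have hlnot : l ∉ Lab a b (v + t • dir) := by
      rw [mem_Lab, sdot_add_smul, mem_Lab.1 hl]
      intro habs
      nlinarith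
    refine ⟨v + t • dir, hfeas, ?_, hsub, ?_, hlnot⟩
    · intro habs; rw [habs] at hlnot; exact hlnot hl
    · have hins : insert c ((Lab a b v).erase l) ⊆ Lab a b (v + t • dir) := by
        intro e he
        rcases Finset.mem_insert.1 he with rfl | he
        · exact hcLab
        · exact hsub he
      have h1 := Finset.card_le_card hins
      rw [Finset.card_insert_of_notMem hcM, Finset.card_erase_of_mem hl, hcard] at h1
      have h2 := hnd _ hfeas
      omega

lemma extra_label (hnd : Nondeg a b) {M : Finset ι} (hMd : M.card + 1 = d)
    {v : Fin d → ℝ} (hv : Feas a b v) (hL : M ⊆ Lab a b v) (hc : (Lab a b v).card = d) :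
    ∃ c, c ∉ M ∧ Lab a b v = insert c M := by
  classical
  obtain ⟨c, hcL, hcM⟩ : ∃ c, c ∈ Lab a b v ∧ c ∉ M := by
    by_contra h
    push_neg at h
    have hsub : Lab a b v ⊆ M := h
    have := Finset.card_le_card hsub
    omega
  refine ⟨c, hcM, ?_⟩
  have hins : insert c M ⊆ Lab a b v := Finset.insert_subset hcL hL
  have hle : (Lab a b v).card ≤ (insert c M).card := by
    rw [Finset.card_insert_of_notMem hcM]; omega
  exact (Finset.eq_of_subset_of_card_le hins hle).symm

lemma between_tight {p q mid : Fin d → ℝ} {θ : ℝ} (h0 : 0 < θ) (h1 : θ < 1)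
    (hp : Feas a b p) (hq : Feas a b q) (hmid : mid = p + θ • (q - p)) {c : ι}
    (hc : c ∈ Lab a b mid) : c ∈ Lab a b p ∧ c ∈ Lab a b q := by
  have hs : sdot a c mid = sdot a c p + θ * (sdot a c q - sdot a c p) := by
    rw [hmid, sdot_add_smul, sdot_sub]
  have hb : sdot a c mid = b c := mem_Lab.1 hc
  have hple := hp c
  have hqle := hq c
  constructor
  · rw [mem_Lab]; nlinarith
  · rw [mem_Lab]; nlinarith

lemma pivot_unique (hray : NoRay a b) (hnd : Nondeg a b) {M : Finset ι} (hMd : M.card + 1 = d)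
    {v1 v2 v3 : Fin d → ℝ} (h1 : Feas a b v1) (h2 : Feas a b v2) (h3 : Feas a b v3)
    (hL1 : M ⊆ Lab a b v1) (hL2 : M ⊆ Lab a b v2) (hL3 : M ⊆ Lab a b v3)
    (hcard1 : (Lab a b v1).card = d) (hcard2 : (Lab a b v2).card = d)
    (hcard3 : (Lab a b v3).card = d)
    (h12 : v1 ≠ v2) (h13 : v1 ≠ v3) (h23 : v2 ≠ v3) : False := by
  classical
  obtain ⟨c1, hc1M, hLab1⟩ := extra_label hnd hMd h1 hL1 hcard1
  obtain ⟨c2, hc2M, hLab2⟩ := extra_label hnd hMd h2 hL2 hcard2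
  obtain ⟨c3, hc3M, hLab3⟩ := extra_label hnd hMd h3 hL3 hcard3
  have hdistinct : ∀ {u u' : Fin d → ℝ} {cu cu' : ι}, Feas a b u → Feas a b u' →
      Lab a b u = insert cu M → Lab a b u' = insert cu' M → (Lab a b u).card = d →
      cu = cu' → u = u' := by
    intro u u' cu cu' hu hu' hlu hlu' hcu hcc
    have : Lab a b u = Lab a b u' := by rw [hlu, hlu', hcc]
    exact unique_of_card hray hnd (le_of_eq hcu.symm) hu hu' (Finset.Subset.refl _)
      (this ▸ Finset.Subset.refl _)
  have hc12 : c1 ≠ c2 := fun h => h12 (hdistinct h1 h2 hLab1 hLab2 hcard1 h)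
  have hc13 : c1 ≠ c3 := fun h => h13 (hdistinct h1 h3 hLab1 hLab3 hcard1 h)
  have hc23 : c2 ≠ c3 := fun h => h23 (hdistinct h2 h3 hLab2 hLab3 hcard2 h)
  set w1 := v2 - v1 with hw1
  set w2 := v3 - v1 with hw2
  have hw1ne : w1 ≠ 0 := sub_ne_zero.2 (Ne.symm h12)
  have hw2ne : w2 ≠ 0 := sub_ne_zero.2 (Ne.symm h13)
  have hnull1 : ∀ c ∈ M, sdot a c w1 = 0 := by
    intro c hc
    rw [hw1, sdot_sub, mem_Lab.1 (hL2 hc), mem_Lab.1 (hL1 hc), sub_self]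
  have hnull2 : ∀ c ∈ M, sdot a c w2 = 0 := by
    intro c hc
    rw [hw2, sdot_sub, mem_Lab.1 (hL3 hc), mem_Lab.1 (hL1 hc), sub_self]
  by_cases hcol : ∃ r : ℝ, w2 = r • w1
  · obtain ⟨r, hr⟩ := hcol
    rcases lt_trichotomy r 0 with hrneg | hr0 | hrpos
    · -- v1 strictly between v2 and v3
      have hθ : (0:ℝ) < 1/(1-r) := div_pos one_pos (by linarith)
      have hθ1 : 1/(1-r) < 1 := by
        rw [div_lt_one (by linarith)]; linarith
      have hmid : v1 = v2 + (1/(1-r)) • (v3 - v2) := by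
        have : v3 - v2 = (r - 1) • w1 := by
          rw [show v3 - v2 = w2 - w1 by rw [hw1, hw2]; abel, hr, sub_smul, one_smul]
        rw [this, smul_smul]
        have : 1 / (1 - r) * (r - 1) = -1 := by
          rw [div_mul_eq_mul_div, div_eq_iff (by linarith : (1:ℝ)-r ≠ 0)]; ring
        rw [this, neg_one_smul, hw1]
        abel
      have := between_tight hθ hθ1 h2 h3 hmid (c := c1)
        (by rw [hLab1]; exact Finset.mem_insert_self _ _)
      have hc1in2 : c1 ∈ Lab a b v2 := this.1
      rw [hLab2, Finset.mem_insert] at hc1in2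
      rcases hc1in2 with h | h
      · exact hc12 h
      · exact hc1M h
    · rw [hr0, zero_smul] at hr; exact hw2ne hr
    · rcases lt_trichotomy r 1 with hrlt | hr1 | hrgt
      · -- v3 strictly between v1 and v2
        have hmid : v3 = v1 + r • (v2 - v1) := by
          rw [← hw1, ← hr, hw2]; abel
        have := between_tight hrpos hrlt h1 h2 hmid (c := c3)
          (by rw [hLab3]; exact Finset.mem_insert_self _ _)
        have hc3in1 : c3 ∈ Lab a b v1 := this.1
        rw [hLab1, Finset.mem_insert] at hc3in1
        rcases hc3in1 with h | h
        · exact hc13 h.symm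
        · exact hc3M h
      · exfalso
        apply h23
        have : w2 = w1 := by rw [hr, hr1, one_smul]
        rw [hw1, hw2] at this
        have := congrArg (fun z => z + v1) this
        simpa [sub_add_cancel] using this.symm
      · -- v2 strictly between v1 and v3
        have hθ : (0:ℝ) < 1/r := by positivity
        have hθ1 : 1/r < 1 := by rw [div_lt_one (by linarith)]; linarith
        have hmid : v2 = v1 + (1/r) • (v3 - v1) := by
          rw [← hw2, hr, smul_smul]
          have : 1 / r * r = 1 := one_div_mul_cancel hrpos.ne'
          rw [this, one_smul, hw1]; abel
        have := between_tight hθ hθ1 h1 h3 hmid (c := c2)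
          (by rw [hLab2]; exact Finset.mem_insert_self _ _)
        have hc2in1 : c2 ∈ Lab a b v1 := this.1
        rw [hLab1, Finset.mem_insert] at hc2in1
        rcases hc2in1 with h | h
        · exact hc12 h.symm
        · exact hc2M h
  · -- non-collinear case
    push_neg at hcol
    set β1 := sdot a c2 w1 with hβ1
    set β2 := sdot a c2 w2 with hβ2
    have hexists : ∃ dir : Fin d → ℝ, dir ≠ 0 ∧ sdot a c2 dir = 0 ∧
        ∀ c ∈ M, sdot a c dir = 0 := by
      by_cases hb1 : β1 = 0
      · exact ⟨w1, hw1ne, hb1 ▸ rfl, hnull1⟩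
      · refine ⟨β1 • w2 - β2 • w1, ?_, ?_, ?_⟩
        · intro habs
          have : β1 • w2 = β2 • w1 := by
            have := sub_eq_zero.1 habs; exact this
          have : w2 = (β2/β1) • w1 := by
            rw [div_eq_inv_mul, mul_smul]
            rw [← this, smul_smul, inv_mul_cancel₀ hb1, one_smul]
          exact hcol (β2/β1) this
        · rw [sdot_sub, sdot_smul, sdot_smul, ← hβ1, ← hβ2]; ring
        · intro c hc
          rw [sdot_sub, sdot_smul, sdot_smul, hnull1 c hc, hnull2 c hc]; ring
    obtain ⟨dir, hdirne, hdirc2, hdirM⟩ := hexists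
    have hall : ∀ c ∈ Lab a b v2, sdot a c dir = 0 := by
      intro c hc
      rw [hLab2, Finset.mem_insert] at hc
      rcases hc with rfl | hc
      · exact hdirc2
      · exact hdirM c hc
    obtain ⟨t, htpos, hfeas, hsub⟩ := localmove h2 hall
    have heqv : v2 = v2 + t • dir := unique_of_card hray hnd (le_of_eq hcard2.symm) h2 hfeas
      (Finset.Subset.refl _) hsub
    have hsm : t • dir = 0 := (left_eq_add.1 heqv)
    rcases smul_eq_zero.1 hsm with h | h
    · exact htpos.ne' h
    · exact hdirne h

end Generic4

end LH

namespace LH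

section Generic5

set_option linter.unusedVariables false

variable {ι : Type*} [Fintype ι] [DecidableEq ι] {d : ℕ}
variable {a : ι → Fin d → ℝ} {b : ι → ℝ}

/-- The set of vertices. -/
def VSet (a : ι → Fin d → ℝ) (b : ι → ℝ) (d' : ℕ) : Set (Fin d → ℝ) :=
  {x | Feas a b x ∧ (Lab a b x).card = d'}

lemma vset_finite (hray : NoRay a b) (hnd : Nondeg a b) : (VSet a b d).Finite := by
  have hinj : Set.InjOn (Lab a b) (VSet a b d) := by
    intro u hu u' hu' heq
    exact unique_of_card hray hnd (le_of_eq hu.2.symm) hu.1 hu'.1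
      (Finset.Subset.refl _) (heq ▸ Finset.Subset.refl _)
  exact Set.Finite.of_finite_image (Set.toFinite _) hinj

end Generic5

end LH

namespace LH

set_option linter.unusedVariables false

variable {m n : ℕ}

/-- The constraint rows for the polytope `P' = {y ≥ 0, A y ≤ 1}`. -/
def aP (A : Fin m → Fin n → ℝ) : (Fin m ⊕ Fin n) → Fin n → ℝ
  | Sum.inl i => fun j => A i j
  | Sum.inr j => fun j' => if j' = j then -1 else 0

def bP : (Fin m ⊕ Fin n) → ℝ := Sum.elim (fun _ => 1) (fun _ => 0)

/-- The constraint rows for the polytope `Q' = {x ≥ 0, Bᵀ x ≤ 1}`. -/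
def aQ (B : Fin m → Fin n → ℝ) : (Fin m ⊕ Fin n) → Fin m → ℝ
  | Sum.inl i => fun i' => if i' = i then -1 else 0
  | Sum.inr j => fun i => B i j

def bQ : (Fin m ⊕ Fin n) → ℝ := Sum.elim (fun _ => 0) (fun _ => 1)

lemma sdot_aP_inl (A : Fin m → Fin n → ℝ) (i : Fin m) (y : Fin n → ℝ) :
    sdot (aP A) (Sum.inl i) y = ∑ j, A i j * y j := rfl

lemma sdot_aP_inr (A : Fin m → Fin n → ℝ) (j : Fin n) (y : Fin n → ℝ) :
    sdot (aP A) (Sum.inr j) y = -y j := by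
  simp [sdot, aP, ite_mul, Finset.sum_ite_eq']

lemma sdot_aQ_inl (B : Fin m → Fin n → ℝ) (i : Fin m) (x : Fin m → ℝ) :
    sdot (aQ B) (Sum.inl i) x = -x i := by
  simp [sdot, aQ, ite_mul, Finset.sum_ite_eq']

lemma sdot_aQ_inr (B : Fin m → Fin n → ℝ) (j : Fin n) (x : Fin m → ℝ) :
    sdot (aQ B) (Sum.inr j) x = ∑ i, B i j * x i := rfl

lemma feas_aP_iff (A : Fin m → Fin n → ℝ) (y : Fin n → ℝ) :
    Feas (aP A) bP y ↔ (∀ i, ∑ j, A i j * y j ≤ 1) ∧ (∀ j, 0 ≤ y j) := by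
  constructor
  · intro h
    refine ⟨fun i => ?_, fun j => ?_⟩
    · have := h (Sum.inl i); rwa [sdot_aP_inl] at this
    · have := h (Sum.inr j); rw [sdot_aP_inr] at this
      simpa [bP] using this
  · rintro ⟨h1, h2⟩ c
    cases c with
    | inl i => rw [sdot_aP_inl]; exact h1 i
    | inr j => rw [sdot_aP_inr]; simpa [bP] using h2 j

lemma feas_aQ_iff (B : Fin m → Fin n → ℝ) (x : Fin m → ℝ) :
    Feas (aQ B) bQ x ↔ (∀ j, ∑ i, B i j * x i ≤ 1) ∧ (∀ i, 0 ≤ x i) := by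
  constructor
  · intro h
    refine ⟨fun j => ?_, fun i => ?_⟩
    · have := h (Sum.inr j); rwa [sdot_aQ_inr] at this
    · have := h (Sum.inl i); rw [sdot_aQ_inl] at this
      simpa [bQ] using this
  · rintro ⟨h1, h2⟩ c
    cases c with
    | inl i => rw [sdot_aQ_inl]; simpa [bQ] using h2 i
    | inr j => rw [sdot_aQ_inr]; exact h1 j

lemma mem_Lab_aP_inl {A : Fin m → Fin n → ℝ} {y : Fin n → ℝ} {i : Fin m} :
    Sum.inl i ∈ Lab (aP A) bP y ↔ ∑ j, A i j * y j = 1 := by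
  rw [mem_Lab, sdot_aP_inl]; rfl

lemma mem_Lab_aP_inr {A : Fin m → Fin n → ℝ} {y : Fin n → ℝ} {j : Fin n} :
    Sum.inr j ∈ Lab (aP A) bP y ↔ y j = 0 := by
  rw [mem_Lab, sdot_aP_inr]
  constructor
  · intro h; have : -y j = 0 := h; linarith
  · intro h; show -y j = bP (Sum.inr j); rw [h]; simp [bP]

lemma mem_Lab_aQ_inl {B : Fin m → Fin n → ℝ} {x : Fin m → ℝ} {i : Fin m} :
    Sum.inl i ∈ Lab (aQ B) bQ x ↔ x i = 0 := by
  rw [mem_Lab, sdot_aQ_inl]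
  constructor
  · intro h; have : -x i = 0 := h; linarith
  · intro h; show -x i = bQ (Sum.inl i); rw [h]; simp [bQ]

lemma mem_Lab_aQ_inr {B : Fin m → Fin n → ℝ} {x : Fin m → ℝ} {j : Fin n} :
    Sum.inr j ∈ Lab (aQ B) bQ x ↔ ∑ i, B i j * x i = 1 := by
  rw [mem_Lab, sdot_aQ_inr]; rfl

end LH

namespace LH

set_option linter.unusedVariables false
set_option maxHeartbeats 1000000

variable {m n : ℕ}

lemma noRay_aP (A : Fin m → Fin n → ℝ) (hA : ∀ i j, 1 ≤ A i j) (i0 : Fin m) :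
    NoRay (aP A) bP := by
  intro x dir hx hall
  funext j
  rw [Pi.zero_apply]
  have key : ∀ t : ℝ, 0 ≤ t → 0 ≤ x j + t * dir j ∧ x j + t * dir j ≤ 1 := by
    intro t ht
    have hfe := (feas_aP_iff A _).1 (hall t ht)
    have hnn : 0 ≤ x j + t * dir j := by
      have := hfe.2 j; simpa using this
    refine ⟨hnn, ?_⟩
    have hsum := hfe.1 i0
    have hterm : A i0 j * ((x + t • dir) j) ≤ ∑ j', A i0 j' * ((x + t • dir) j') := by
      apply Finset.single_le_sum (f := fun j' => A i0 j' * ((x + t • dir) j'))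
      · intro j' _
        have h1 := (hfe.2 j')
        have h2 := hA i0 j'
        positivity
      · exact Finset.mem_univ j
    have hAj := hA i0 j
    have hlow : (x + t • dir) j ≤ A i0 j * ((x + t • dir) j) := by
      have : (0:ℝ) ≤ (x + t • dir) j := hfe.2 j
      nlinarith
    have : (x + t • dir) j ≤ 1 := le_trans hlow (le_trans hterm hsum)
    simpa using this
  by_contra hne
  rcases lt_or_gt_of_ne hne with hneg | hpos
  · have ht : (0:ℝ) ≤ (x j + 1)/(-dir j) := by
      apply div_nonneg
      · linarith [(key 0 le_rfl).1]
      · linarith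
    have hd : -dir j > 0 := by linarith
    have heq : x j + (x j + 1) / (-dir j) * dir j = -1 := by
      field_simp
      ring
    have h0 := (key ((x j + 1)/(-dir j)) ht).1
    rw [heq] at h0
    linarith
  · have ht : (0:ℝ) ≤ 2/(dir j) := by positivity
    have h2 := (key _ ht).2
    have : x j + 2 / dir j * dir j = x j + 2 := by field_simp
    rw [this] at h2
    linarith [(key 0 le_rfl).1]

lemma noRay_aQ (B : Fin m → Fin n → ℝ) (hB : ∀ i j, 1 ≤ B i j) (j0 : Fin n) :
    NoRay (aQ B) bQ := by
  intro x dir hx hall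
  funext i
  rw [Pi.zero_apply]
  have key : ∀ t : ℝ, 0 ≤ t → 0 ≤ x i + t * dir i ∧ x i + t * dir i ≤ 1 := by
    intro t ht
    have hfe := (feas_aQ_iff B _).1 (hall t ht)
    have hnn : 0 ≤ x i + t * dir i := by
      have := hfe.2 i; simpa using this
    refine ⟨hnn, ?_⟩
    have hsum := hfe.1 j0
    have hterm : B i j0 * ((x + t • dir) i) ≤ ∑ i', B i' j0 * ((x + t • dir) i') := by
      apply Finset.single_le_sum (f := fun i' => B i' j0 * ((x + t • dir) i'))
      · intro i' _
        have h1 := (hfe.2 i')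
        have h2 := hB i' j0
        positivity
      · exact Finset.mem_univ i
    have hBi := hB i j0
    have hlow : (x + t • dir) i ≤ B i j0 * ((x + t • dir) i) := by
      have : (0:ℝ) ≤ (x + t • dir) i := hfe.2 i
      nlinarith
    have : (x + t • dir) i ≤ 1 := le_trans hlow (le_trans hterm hsum)
    simpa using this
  by_contra hne
  rcases lt_or_gt_of_ne hne with hneg | hpos
  · have ht : (0:ℝ) ≤ (x i + 1)/(-dir i) := by
      apply div_nonneg
      · linarith [(key 0 le_rfl).1]
      · linarith
    have hd : -dir i > 0 := by linarith
    have heq : x i + (x i + 1) / (-dir i) * dir i = -1 := by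
      field_simp
      ring
    have h0 := (key ((x i + 1)/(-dir i)) ht).1
    rw [heq] at h0
    linarith
  · have ht : (0:ℝ) ≤ 2/(dir i) := by positivity
    have h2 := (key _ ht).2
    have : x i + 2 / dir i * dir i = x i + 2 := by field_simp
    rw [this] at h2
    linarith [(key 0 le_rfl).1]

end LH

namespace LH

set_option linter.unusedVariables false
set_option maxHeartbeats 1000000

variable {m n : ℕ}

lemma lab_aP_zero (A : Fin m → Fin n → ℝ) :
    Lab (aP A) bP (0 : Fin n → ℝ) = Finset.univ.image Sum.inr := by
  ext c
  cases c with
  | inl i =>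
    simp only [Finset.mem_image]
    rw [mem_Lab_aP_inl]
    simp
  | inr j =>
    simp only [Finset.mem_image]
    rw [mem_Lab_aP_inr]
    simp

lemma lab_aQ_zero (B : Fin m → Fin n → ℝ) :
    Lab (aQ B) bQ (0 : Fin m → ℝ) = Finset.univ.image Sum.inl := by
  ext c
  cases c with
  | inl i =>
    simp only [Finset.mem_image]
    rw [mem_Lab_aQ_inl]
    simp
  | inr j =>
    simp only [Finset.mem_image]
    rw [mem_Lab_aQ_inr]
    simp

lemma sum_pos_of_ne_zero {d : ℕ} {y : Fin d → ℝ} (hnn : ∀ j, 0 ≤ y j) (hne : y ≠ 0) :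
    0 < ∑ j, y j := by
  rcases (Finset.sum_nonneg (fun j _ => hnn j)).lt_or_eq with h | h
  · exact h
  · exfalso
    apply hne
    funext j
    have := (Finset.sum_eq_zero_iff_of_nonneg (fun j _ => hnn j)).1 h.symm j (Finset.mem_univ j)
    simpa using this

/-- Nondegeneracy transfer for `P`. -/
lemma nondeg_aP {A : Fin m → Fin n → ℝ} {c : ℝ}
    (hP : ∀ v, MemP A v → (LabelP A v).ncard ≤ n) :
    Nondeg (aP (fun i j => A i j + c)) bP := by
  intro y hy
  set A' : Fin m → Fin n → ℝ := fun i j => A i j + c with hA'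
  by_cases hy0 : y = 0
  · rw [hy0, lab_aP_zero]
    rw [Finset.card_image_of_injective _ Sum.inr_injective]
    simp
  · have hfe := (feas_aP_iff A' y).1 hy
    have hs : 0 < ∑ j, y j := sum_pos_of_ne_zero hfe.2 hy0
    set s := ∑ j, y j with hsdef
    set v : (Fin n → ℝ) × ℝ := (fun j => y j / s, 1/s - c) with hv
    have hsum_split : ∀ i, ∑ j, A' i j * y j = (∑ j, A i j * y j) + c * s := by
      intro i
      rw [hsdef, Finset.mul_sum, ← Finset.sum_add_distrib]
      exact Finset.sum_congr rfl (fun j _ => by rw [hA']; ring)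
    have hdiv : ∀ i, ∑ j, A i j * v.1 j = (∑ j, A i j * y j) / s := by
      intro i
      rw [hv, Finset.sum_div]
      exact Finset.sum_congr rfl (fun j _ => by rw [mul_div_assoc])
    have hmem : MemP A v := by
      refine ⟨fun i => ?_, fun j => ?_, ?_⟩
      · rw [hdiv]
        have h1 : ∑ j, A' i j * y j ≤ 1 := hfe.1 i
        rw [hsum_split] at h1
        have h2 : (∑ j, A i j * y j) ≤ 1 - c * s := by linarith
        show (∑ j, A i j * y j) / s ≤ 1/s - c
        have h3 : (∑ j, A i j * y j) / s ≤ (1 - c * s)/s := by gcongr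
        have h4 : (1 - c * s)/s = 1/s - c := by
          rw [sub_div, mul_div_cancel_right₀ c hs.ne']
        linarith
      · exact div_nonneg (hfe.2 j) hs.le
      · show ∑ j, y j / s = 1
        rw [← Finset.sum_div, ← hsdef, div_self hs.ne']
    have hlabeq : LabelP A v = (↑(Lab (aP A') bP y) : Set (Fin m ⊕ Fin n)) := by
      ext l
      cases l with
      | inl i =>
        simp only [LabelP, Set.mem_setOf_eq, Sum.elim_inl]
        rw [Finset.mem_coe, mem_Lab_aP_inl]
        rw [hdiv]
        constructor
        · intro h
          have h' : (∑ j, A i j * y j) / s = 1/s - c := h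
          rw [div_eq_iff hs.ne'] at h'
          rw [hsum_split, h', sub_mul, one_div, inv_mul_cancel₀ hs.ne']
          ring
        · intro h
          rw [hsum_split] at h
          have h2 : (∑ j, A i j * y j) = 1 - c * s := by linarith
          show (∑ j, A i j * y j) / s = 1/s - c
          rw [h2, sub_div, mul_div_cancel_right₀ c hs.ne']
      | inr j =>
        simp only [LabelP, Set.mem_setOf_eq, Sum.elim_inr]
        rw [Finset.mem_coe, mem_Lab_aP_inr]
        constructor
        · intro h
          have h' : y j / s = 0 := h
          rcases div_eq_zero_iff.1 h' with h'' | h''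
          · exact h''
          · exact absurd h'' hs.ne'
        · intro h
          show y j / s = 0
          rw [h, zero_div]
    have := hP v hmem
    rw [hlabeq, Set.ncard_coe_finset] at this
    exact this

end LH

namespace LH

set_option linter.unusedVariables false
set_option maxHeartbeats 1000000

variable {m n : ℕ}

/-- Nondegeneracy transfer for `Q`. -/
lemma nondeg_aQ {B : Fin m → Fin n → ℝ} {c : ℝ}
    (hQ : ∀ w, MemQ B w → (LabelQ B w).ncard ≤ m) :
    Nondeg (aQ (fun i j => B i j + c)) bQ := by
  intro x hx
  set B' : Fin m → Fin n → ℝ := fun i j => B i j + c with hB'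
  by_cases hx0 : x = 0
  · rw [hx0, lab_aQ_zero]
    rw [Finset.card_image_of_injective _ Sum.inl_injective]
    simp
  · have hfe := (feas_aQ_iff B' x).1 hx
    have hs : 0 < ∑ i, x i := sum_pos_of_ne_zero hfe.2 hx0
    set s := ∑ i, x i with hsdef
    set w : (Fin m → ℝ) × ℝ := (fun i => x i / s, 1/s - c) with hw
    have hsum_split : ∀ j, ∑ i, B' i j * x i = (∑ i, x i * B i j) + c * s := by
      intro j
      rw [hsdef, Finset.mul_sum, ← Finset.sum_add_distrib]
      exact Finset.sum_congr rfl (fun i _ => by rw [hB']; ring)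
    have hdiv : ∀ j, ∑ i, w.1 i * B i j = (∑ i, x i * B i j) / s := by
      intro j
      rw [hw, Finset.sum_div]
      exact Finset.sum_congr rfl (fun i _ => by simp only; rw [div_mul_eq_mul_div])
    have hmem : MemQ B w := by
      refine ⟨fun i => ?_, fun j => ?_, ?_⟩
      · exact div_nonneg (hfe.2 i) hs.le
      · rw [hdiv]
        have h1 : ∑ i, B' i j * x i ≤ 1 := hfe.1 j
        rw [hsum_split] at h1
        have h2 : (∑ i, x i * B i j) ≤ 1 - c * s := by linarith
        show (∑ i, x i * B i j) / s ≤ 1/s - c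
        have h3 : (∑ i, x i * B i j) / s ≤ (1 - c * s)/s := by gcongr
        have h4 : (1 - c * s)/s = 1/s - c := by
          rw [sub_div, mul_div_cancel_right₀ c hs.ne']
        linarith
      · show ∑ i, x i / s = 1
        rw [← Finset.sum_div, ← hsdef, div_self hs.ne']
    have hlabeq : LabelQ B w = (↑(Lab (aQ B') bQ x) : Set (Fin m ⊕ Fin n)) := by
      ext l
      cases l with
      | inl i =>
        simp only [LabelQ, Set.mem_setOf_eq, Sum.elim_inl]
        rw [Finset.mem_coe, mem_Lab_aQ_inl]
        constructor
        · intro h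
          have h' : x i / s = 0 := h
          rcases div_eq_zero_iff.1 h' with h'' | h''
          · exact h''
          · exact absurd h'' hs.ne'
        · intro h
          show x i / s = 0
          rw [h, zero_div]
      | inr j =>
        simp only [LabelQ, Set.mem_setOf_eq, Sum.elim_inr]
        rw [Finset.mem_coe, mem_Lab_aQ_inr]
        rw [show (∑ i, B' i j * x i = 1) ↔ ((∑ i, x i * B i j) + c * s = 1) by
          rw [hsum_split]]
        constructor
        · intro h
          have h' : (∑ i, x i * B i j) / s = 1/s - c := by
            rw [hdiv] at h
            exact h
          rw [div_eq_iff hs.ne'] at h'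
          rw [h', sub_mul, one_div, inv_mul_cancel₀ hs.ne']
          ring
        · intro h
          have h2 : (∑ i, x i * B i j) = 1 - c * s := by linarith
          rw [hdiv]
          show (∑ i, x i * B i j) / s = 1/s - c
          rw [h2, sub_div, mul_div_cancel_right₀ c hs.ne']
    have := hQ w hmem
    rw [hlabeq, Set.ncard_coe_finset] at this
    exact this

end LH


open Finset

namespace LH

set_option linter.unusedVariables false
set_option maxHeartbeats 1000000

variable {m n : ℕ}

lemma single_simplex {d : ℕ} (i : Fin d) : InSimplex (Pi.single i 1 : Fin d → ℝ) := by
  constructor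
  · intro j
    by_cases h : j = i
    · subst h; simp
    · simp [Pi.single_apply, h]
  · simp

lemma sum_single_mul {d : ℕ} (i : Fin d) (f : Fin d → ℝ) :
    ∑ i', (Pi.single i 1 : Fin d → ℝ) i' * f i' = f i := by
  rw [Finset.sum_eq_single i]
  · simp
  · intro b _ hb; simp [Pi.single_apply, hb]
  · intro h; exact absurd (Finset.mem_univ i) h

lemma double_rearrange (x : Fin m → ℝ) (A : Fin m → Fin n → ℝ) (y : Fin n → ℝ) :
    ∑ i, ∑ j, x i * A i j * y j = ∑ i, x i * (∑ j, A i j * y j) := by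
  apply Finset.sum_congr rfl
  intro i _
  rw [Finset.mul_sum]
  exact Finset.sum_congr rfl (fun j _ => by ring)

lemma double_rearrange' (x : Fin m → ℝ) (B : Fin m → Fin n → ℝ) (y : Fin n → ℝ) :
    ∑ i, ∑ j, x i * B i j * y j = ∑ j, y j * (∑ i, x i * B i j) := by
  rw [Finset.sum_comm]
  apply Finset.sum_congr rfl
  intro j _
  rw [Finset.mul_sum]
  exact Finset.sum_congr rfl (fun i _ => by ring)

lemma double_ones {x : Fin m → ℝ} {y : Fin n → ℝ} (hx : ∑ i, x i = 1) (hy : ∑ j, y j = 1) :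
    ∑ i, ∑ j, x i * y j = 1 := by
  calc ∑ i, ∑ j, x i * y j = ∑ i, x i * ∑ j, y j := by
        exact Finset.sum_congr rfl (fun i _ => (Finset.mul_sum _ _ _).symm)
    _ = 1 := by rw [hy]; simp [hx]

/-- payoff of the row player. -/
def payA (A : Fin m → Fin n → ℝ) (x : Fin m → ℝ) (y : Fin n → ℝ) : ℝ :=
  ∑ i, ∑ j, x i * A i j * y j

lemma payA_ge_one {A : Fin m → Fin n → ℝ} (hA : ∀ i j, 1 ≤ A i j) {x : Fin m → ℝ}
    {y : Fin n → ℝ} (hx : InSimplex x) (hy : InSimplex y) : 1 ≤ payA A x y := by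
  have h1 : ∑ i, ∑ j, x i * y j ≤ payA A x y := by
    apply Finset.sum_le_sum
    intro i _
    apply Finset.sum_le_sum
    intro j _
    have h1 := hA i j
    have h2 := hx.1 i
    have h3 := hy.1 j
    nlinarith [mul_nonneg (mul_nonneg h2 (sub_nonneg.2 h1)) h3]
  rw [double_ones hx.2 hy.2] at h1
  exact h1

/-- rows bounded by the value, at a Nash equilibrium. -/
lemma rows_le {A B : Fin m → Fin n → ℝ} {x : Fin m → ℝ} {y : Fin n → ℝ}
    (hN : IsNash A B x y) (i : Fin m) : ∑ j, A i j * y j ≤ payA A x y := by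
  have := hN.2.2.1 (Pi.single i 1) (single_simplex i)
  calc ∑ j, A i j * y j = ∑ i', ∑ j, (Pi.single i 1 : Fin m → ℝ) i' * A i' j * y j := by
        have hh : ∑ i', ∑ j, (Pi.single i 1 : Fin m → ℝ) i' * A i' j * y j
            = ∑ i', (Pi.single i 1 : Fin m → ℝ) i' * (∑ j, A i' j * y j) :=
          Finset.sum_congr rfl (fun i' _ => by
            rw [Finset.mul_sum]; exact Finset.sum_congr rfl (fun j _ => by ring))
        rw [hh, sum_single_mul i (fun i' => ∑ j, A i' j * y j)]
    _ ≤ payA A x y := this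

lemma cols_le {A B : Fin m → Fin n → ℝ} {x : Fin m → ℝ} {y : Fin n → ℝ}
    (hN : IsNash A B x y) (j : Fin n) : ∑ i, x i * B i j ≤ payA B x y := by
  have := hN.2.2.2 (Pi.single j 1) (single_simplex j)
  calc ∑ i, x i * B i j = ∑ i, ∑ j', x i * B i j' * (Pi.single j 1 : Fin n → ℝ) j' := by
        apply Finset.sum_congr rfl
        intro i _
        have hh : ∑ j', x i * B i j' * (Pi.single j 1 : Fin n → ℝ) j'
            = ∑ j', (Pi.single j 1 : Fin n → ℝ) j' * (x i * B i j') :=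
          Finset.sum_congr rfl (fun j' _ => by ring)
        rw [hh, sum_single_mul j (fun j' => x i * B i j')]
    _ ≤ payA B x y := this

lemma rows_eq {A B : Fin m → Fin n → ℝ} {x : Fin m → ℝ} {y : Fin n → ℝ}
    (hN : IsNash A B x y) {i : Fin m} (hxi : 0 < x i) :
    ∑ j, A i j * y j = payA A x y := by
  by_contra hne
  have hlt : ∑ j, A i j * y j < payA A x y := lt_of_le_of_ne (rows_le hN i) hne
  have hx := hN.1
  have : payA A x y < payA A x y := by
    calc payA A x y = ∑ i', x i' * (∑ j, A i' j * y j) := double_rearrange x A y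
      _ < ∑ i', x i' * payA A x y := by
          apply Finset.sum_lt_sum
          · intro i' _
            exact mul_le_mul_of_nonneg_left (rows_le hN i') (hx.1 i')
          · exact ⟨i, Finset.mem_univ i, by nlinarith⟩
      _ = payA A x y := by rw [← Finset.sum_mul, hx.2, one_mul]
  exact absurd this (lt_irrefl _)

lemma cols_eq {A B : Fin m → Fin n → ℝ} {x : Fin m → ℝ} {y : Fin n → ℝ}
    (hN : IsNash A B x y) {j : Fin n} (hyj : 0 < y j) :
    ∑ i, x i * B i j = payA B x y := by
  by_contra hne
  have hlt : ∑ i, x i * B i j < payA B x y := lt_of_le_of_ne (cols_le hN j) hne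
  have hy := hN.2.1
  have : payA B x y < payA B x y := by
    calc payA B x y = ∑ j', y j' * (∑ i, x i * B i j') := double_rearrange' x B y
      _ < ∑ j', y j' * payA B x y := by
          apply Finset.sum_lt_sum
          · intro j' _
            exact mul_le_mul_of_nonneg_left (cols_le hN j') (hy.1 j')
          · exact ⟨j, Finset.mem_univ j, by nlinarith⟩
      _ = payA B x y := by rw [← Finset.sum_mul, hy.2, one_mul]
  exact absurd this (lt_irrefl _)

end LH

namespace LH

set_option linter.unusedVariables false
set_option maxHeartbeats 1000000

variable {m n : ℕ}

/-- completely labeled pairs. -/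
def Complete (A B : Fin m → Fin n → ℝ) : Set ((Fin n → ℝ) × (Fin m → ℝ)) :=
  {p | Feas (aP A) bP p.1 ∧ Feas (aQ B) bQ p.2 ∧
    ∀ l, l ∈ Lab (aP A) bP p.1 ∨ l ∈ Lab (aQ B) bQ p.2}

/-- map from equilibria to completely labeled pairs. -/
noncomputable def toPair (A B : Fin m → Fin n → ℝ) (p : (Fin m → ℝ) × (Fin n → ℝ)) :
    (Fin n → ℝ) × (Fin m → ℝ) :=
  ((payA A p.1 p.2)⁻¹ • p.2, (payA B p.1 p.2)⁻¹ • p.1)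

/-- map from completely labeled pairs to equilibria. -/
noncomputable def toEq (p : (Fin n → ℝ) × (Fin m → ℝ)) : (Fin m → ℝ) × (Fin n → ℝ) :=
  ((∑ i, p.2 i)⁻¹ • p.2, (∑ j, p.1 j)⁻¹ • p.1)

lemma forward {A B : Fin m → Fin n → ℝ} (hA : ∀ i j, 1 ≤ A i j) (hB : ∀ i j, 1 ≤ B i j)
    {x : Fin m → ℝ} {y : Fin n → ℝ} (hN : IsNash A B x y) :
    toPair A B (x, y) ∈ Complete A B ∧ (toPair A B (x, y)).1 ≠ 0 ∧
      (toPair A B (x, y)).2 ≠ 0 ∧ toEq (toPair A B (x, y)) = (x, y) := by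
  have hx := hN.1
  have hy := hN.2.1
  have hpA : (1:ℝ) ≤ payA A x y := payA_ge_one hA hx hy
  have hpB : (1:ℝ) ≤ payA B x y := payA_ge_one hB hx hy
  have hpA0 : (0:ℝ) < payA A x y := by linarith
  have hpB0 : (0:ℝ) < payA B x y := by linarith
  set v : Fin n → ℝ := (payA A x y)⁻¹ • y with hv
  set w : Fin m → ℝ := (payA B x y)⁻¹ • x with hw
  have hvfeas : Feas (aP A) bP v := by
    rw [feas_aP_iff]
    constructor
    · intro i
      have := rows_le hN i
      have heq : ∑ j, A i j * v j = (∑ j, A i j * y j) / payA A x y := by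
        rw [hv, Finset.sum_div]
        exact Finset.sum_congr rfl (fun j _ => by
          simp only [Pi.smul_apply, smul_eq_mul]; ring)
      rw [heq, div_le_one hpA0]
      exact this
    · intro j
      rw [hv]
      simp only [Pi.smul_apply, smul_eq_mul]
      have := hy.1 j
      positivity
  have hwfeas : Feas (aQ B) bQ w := by
    rw [feas_aQ_iff]
    constructor
    · intro j
      have := cols_le hN j
      have heq : ∑ i, B i j * w i = (∑ i, x i * B i j) / payA B x y := by
        rw [hw, Finset.sum_div]
        exact Finset.sum_congr rfl (fun i _ => by
          simp only [Pi.smul_apply, smul_eq_mul]; ring)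
      rw [heq, div_le_one hpB0]
      exact this
    · intro i
      rw [hw]
      simp only [Pi.smul_apply, smul_eq_mul]
      have := hx.1 i
      positivity
  have hcomp : ∀ l, l ∈ Lab (aP A) bP v ∨ l ∈ Lab (aQ B) bQ w := by
    intro l
    cases l with
    | inl i =>
      by_cases hxi : x i = 0
      · right
        rw [mem_Lab_aQ_inl, hw]
        simp [hxi]
      · left
        have hxi' : 0 < x i := lt_of_le_of_ne (hx.1 i) (Ne.symm hxi)
        rw [mem_Lab_aP_inl]
        have := rows_eq hN hxi'
        have heq : ∑ j, A i j * v j = (∑ j, A i j * y j) / payA A x y := by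
          rw [hv, Finset.sum_div]
          exact Finset.sum_congr rfl (fun j _ => by
            simp only [Pi.smul_apply, smul_eq_mul]; ring)
        rw [heq, this, div_self hpA0.ne']
    | inr j =>
      by_cases hyj : y j = 0
      · left
        rw [mem_Lab_aP_inr, hv]
        simp [hyj]
      · right
        have hyj' : 0 < y j := lt_of_le_of_ne (hy.1 j) (Ne.symm hyj)
        rw [mem_Lab_aQ_inr]
        have := cols_eq hN hyj'
        have heq : ∑ i, B i j * w i = (∑ i, x i * B i j) / payA B x y := by
          rw [hw, Finset.sum_div]
          exact Finset.sum_congr rfl (fun i _ => by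
            simp only [Pi.smul_apply, smul_eq_mul]; ring)
        rw [heq, this, div_self hpB0.ne']
  have hsv : ∑ j, v j = (payA A x y)⁻¹ := by
    rw [hv]
    simp only [Pi.smul_apply, smul_eq_mul]
    rw [← Finset.mul_sum, hy.2, mul_one]
  have hsw : ∑ i, w i = (payA B x y)⁻¹ := by
    rw [hw]
    simp only [Pi.smul_apply, smul_eq_mul]
    rw [← Finset.mul_sum, hx.2, mul_one]
  have hvne : v ≠ 0 := by
    intro h
    have := hsv
    rw [h] at this
    simp at this
    exact hpA0.ne' this.symm
  have hwne : w ≠ 0 := by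
    intro h
    have := hsw
    rw [h] at this
    simp at this
    exact hpB0.ne' this.symm
  refine ⟨⟨hvfeas, hwfeas, hcomp⟩, hvne, hwne, ?_⟩
  show ((∑ i, w i)⁻¹ • w, (∑ j, v j)⁻¹ • v) = (x, y)
  rw [hsv, hsw, inv_inv, inv_inv, hv, hw, smul_smul, smul_smul,
    mul_inv_cancel₀ hpB0.ne', mul_inv_cancel₀ hpA0.ne', one_smul, one_smul]

end LH

namespace LH

set_option linter.unusedVariables false
set_option maxHeartbeats 1000000

variable {m n : ℕ}

lemma complete_zero_iff {A B : Fin m → Fin n → ℝ} {p : (Fin n → ℝ) × (Fin m → ℝ)}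
    (hp : p ∈ Complete A B) : p.1 = 0 ↔ p.2 = 0 := by
  obtain ⟨h1, h2, hcomp⟩ := hp
  have hv := (feas_aP_iff A p.1).1 h1
  have hw := (feas_aQ_iff B p.2).1 h2
  constructor
  · intro hz
    funext i
    rcases hcomp (Sum.inl i) with h | h
    · rw [mem_Lab_aP_inl] at h
      rw [hz] at h
      simp at h
    · rw [mem_Lab_aQ_inl] at h
      simpa using h
  · intro hz
    funext j
    rcases hcomp (Sum.inr j) with h | h
    · rw [mem_Lab_aP_inr] at h
      simpa using h
    · rw [mem_Lab_aQ_inr] at h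
      rw [hz] at h
      simp at h

lemma backward {A B : Fin m → Fin n → ℝ} {p : (Fin n → ℝ) × (Fin m → ℝ)}
    (hp : p ∈ Complete A B) (hne : p.1 ≠ 0) :
    IsNash A B (toEq p).1 (toEq p).2 ∧ toPair A B (toEq p) = p := by
  obtain ⟨h1, h2, hcomp⟩ := hp
  have hv := (feas_aP_iff A p.1).1 h1
  have hw := (feas_aQ_iff B p.2).1 h2
  have hwne : p.2 ≠ 0 := fun h => hne ((complete_zero_iff ⟨h1, h2, hcomp⟩).2 h)
  have hsv : 0 < ∑ j, p.1 j := sum_pos_of_ne_zero hv.2 hne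
  have hsw : 0 < ∑ i, p.2 i := sum_pos_of_ne_zero hw.2 hwne
  set x : Fin m → ℝ := (∑ i, p.2 i)⁻¹ • p.2 with hx
  set y : Fin n → ℝ := (∑ j, p.1 j)⁻¹ • p.1 with hy
  have hxs : InSimplex x := by
    constructor
    · intro i
      rw [hx]; simp only [Pi.smul_apply, smul_eq_mul]
      exact mul_nonneg (inv_nonneg.2 hsw.le) (hw.2 i)
    · rw [hx]; simp only [Pi.smul_apply, smul_eq_mul]
      rw [← Finset.mul_sum, inv_mul_cancel₀ hsw.ne']
  have hys : InSimplex y := by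
    constructor
    · intro j
      rw [hy]; simp only [Pi.smul_apply, smul_eq_mul]
      exact mul_nonneg (inv_nonneg.2 hsv.le) (hv.2 j)
    · rw [hy]; simp only [Pi.smul_apply, smul_eq_mul]
      rw [← Finset.mul_sum, inv_mul_cancel₀ hsv.ne']
  -- row sums for y
  have hrow_le : ∀ i, ∑ j, A i j * y j ≤ (∑ j, p.1 j)⁻¹ := by
    intro i
    have heq : ∑ j, A i j * y j = (∑ j, A i j * p.1 j) * (∑ j, p.1 j)⁻¹ := by
      rw [hy, Finset.sum_mul]
      exact Finset.sum_congr rfl (fun j _ => by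
        simp only [Pi.smul_apply, smul_eq_mul]; ring)
    rw [heq]
    have := hv.1 i
    have h0 : (0:ℝ) ≤ (∑ j, p.1 j)⁻¹ := inv_nonneg.2 hsv.le
    nlinarith
  have hrow_eq : ∀ i, 0 < x i → ∑ j, A i j * y j = (∑ j, p.1 j)⁻¹ := by
    intro i hxi
    have hpi : p.2 i ≠ 0 := by
      intro h
      rw [hx] at hxi
      simp only [Pi.smul_apply, smul_eq_mul, h, mul_zero] at hxi
      exact lt_irrefl _ hxi
    have : Sum.inl i ∉ Lab (aQ B) bQ p.2 := by
      rw [mem_Lab_aQ_inl]; exact hpi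
    have hrow : Sum.inl i ∈ Lab (aP A) bP p.1 := (hcomp (Sum.inl i)).resolve_right this
    rw [mem_Lab_aP_inl] at hrow
    have heq : ∑ j, A i j * y j = (∑ j, A i j * p.1 j) * (∑ j, p.1 j)⁻¹ := by
      rw [hy, Finset.sum_mul]
      exact Finset.sum_congr rfl (fun j _ => by
        simp only [Pi.smul_apply, smul_eq_mul]; ring)
    rw [heq, hrow, one_mul]
  have hcol_le : ∀ j, ∑ i, x i * B i j ≤ (∑ i, p.2 i)⁻¹ := by
    intro j
    have heq : ∑ i, x i * B i j = (∑ i, B i j * p.2 i) * (∑ i, p.2 i)⁻¹ := by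
      rw [hx, Finset.sum_mul]
      exact Finset.sum_congr rfl (fun i _ => by
        simp only [Pi.smul_apply, smul_eq_mul]; ring)
    rw [heq]
    have := hw.1 j
    have h0 : (0:ℝ) ≤ (∑ i, p.2 i)⁻¹ := inv_nonneg.2 hsw.le
    nlinarith
  have hcol_eq : ∀ j, 0 < y j → ∑ i, x i * B i j = (∑ i, p.2 i)⁻¹ := by
    intro j hyj
    have hpj : p.1 j ≠ 0 := by
      intro h
      rw [hy] at hyj
      simp only [Pi.smul_apply, smul_eq_mul, h, mul_zero] at hyj
      exact lt_irrefl _ hyj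
    have : Sum.inr j ∉ Lab (aP A) bP p.1 := by
      rw [mem_Lab_aP_inr]; exact hpj
    have hcol : Sum.inr j ∈ Lab (aQ B) bQ p.2 := (hcomp (Sum.inr j)).resolve_left this
    rw [mem_Lab_aQ_inr] at hcol
    have heq : ∑ i, x i * B i j = (∑ i, B i j * p.2 i) * (∑ i, p.2 i)⁻¹ := by
      rw [hx, Finset.sum_mul]
      exact Finset.sum_congr rfl (fun i _ => by
        simp only [Pi.smul_apply, smul_eq_mul]; ring)
    rw [heq, hcol, one_mul]
  -- the value of the game
  have hvalA : payA A x y = (∑ j, p.1 j)⁻¹ := by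
    rw [payA, double_rearrange]
    have : ∀ i, x i * (∑ j, A i j * y j) = x i * (∑ j, p.1 j)⁻¹ := by
      intro i
      rcases (hxs.1 i).lt_or_eq with h | h
      · rw [hrow_eq i h]
      · rw [← h, zero_mul, zero_mul]
    rw [Finset.sum_congr rfl (fun i _ => this i), ← Finset.sum_mul, hxs.2, one_mul]
  have hvalB : payA B x y = (∑ i, p.2 i)⁻¹ := by
    rw [payA, double_rearrange']
    have : ∀ j, y j * (∑ i, x i * B i j) = y j * (∑ i, p.2 i)⁻¹ := by
      intro j
      rcases (hys.1 j).lt_or_eq with h | h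
      · rw [hcol_eq j h]
      · rw [← h, zero_mul, zero_mul]
    rw [Finset.sum_congr rfl (fun j _ => this j), ← Finset.sum_mul, hys.2, one_mul]
  have hNash : IsNash A B x y := by
    refine ⟨hxs, hys, ?_, ?_⟩
    · intro x' hx'
      rw [show (∑ i, ∑ j, x i * A i j * y j) = payA A x y from rfl, hvalA]
      rw [double_rearrange]
      calc ∑ i, x' i * (∑ j, A i j * y j) ≤ ∑ i, x' i * (∑ j, p.1 j)⁻¹ := by
            apply Finset.sum_le_sum
            intro i _
            exact mul_le_mul_of_nonneg_left (hrow_le i) (hx'.1 i)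
        _ = (∑ j, p.1 j)⁻¹ := by rw [← Finset.sum_mul, hx'.2, one_mul]
    · intro y' hy'
      rw [show (∑ i, ∑ j, x i * B i j * y j) = payA B x y from rfl, hvalB]
      rw [double_rearrange']
      calc ∑ j, y' j * (∑ i, x i * B i j) ≤ ∑ j, y' j * (∑ i, p.2 i)⁻¹ := by
            apply Finset.sum_le_sum
            intro j _
            exact mul_le_mul_of_nonneg_left (hcol_le j) (hy'.1 j)
        _ = (∑ i, p.2 i)⁻¹ := by rw [← Finset.sum_mul, hy'.2, one_mul]
  refine ⟨hNash, ?_⟩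
  show ((payA A x y)⁻¹ • y, (payA B x y)⁻¹ • x) = p
  rw [hvalA, hvalB, inv_inv, inv_inv, hx, hy, smul_smul, smul_smul,
    mul_inv_cancel₀ hsv.ne', mul_inv_cancel₀ hsw.ne', one_smul, one_smul]

end LH

namespace LH

set_option linter.unusedVariables false
set_option maxHeartbeats 1000000

variable {m n : ℕ}

lemma shift_sum (x : Fin m → ℝ) (y : Fin n → ℝ) (A : Fin m → Fin n → ℝ) (c : ℝ)
    (hx : ∑ i, x i = 1) (hy : ∑ j, y j = 1) :
    ∑ i, ∑ j, x i * (A i j + c) * y j = (∑ i, ∑ j, x i * A i j * y j) + c := by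
  have h1 : ∀ i, ∑ j, x i * (A i j + c) * y j
      = (∑ j, x i * A i j * y j) + ∑ j, c * (x i * y j) := by
    intro i
    rw [← Finset.sum_add_distrib]
    exact Finset.sum_congr rfl (fun j _ => by ring)
  rw [Finset.sum_congr rfl (fun i _ => h1 i), Finset.sum_add_distrib]
  congr 1
  have h2 : ∀ i, ∑ j, c * (x i * y j) = c * x i := by
    intro i
    rw [← Finset.mul_sum, ← Finset.mul_sum, hy, mul_one]
  rw [Finset.sum_congr rfl (fun i _ => h2 i), ← Finset.mul_sum, hx, mul_one]

lemma isNash_shift (A B : Fin m → Fin n → ℝ) (cA cB : ℝ) (x : Fin m → ℝ) (y : Fin n → ℝ) :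
    IsNash A B x y ↔
      IsNash (fun i j => A i j + cA) (fun i j => B i j + cB) x y := by
  constructor
  · rintro ⟨hx, hy, hA, hB⟩
    refine ⟨hx, hy, ?_, ?_⟩
    · intro x' hx'
      rw [shift_sum x' y A cA hx'.2 hy.2, shift_sum x y A cA hx.2 hy.2]
      linarith [hA x' hx']
    · intro y' hy'
      rw [shift_sum x y' B cB hx.2 hy'.2, shift_sum x y B cB hx.2 hy.2]
      linarith [hB y' hy']
  · rintro ⟨hx, hy, hA, hB⟩
    refine ⟨hx, hy, ?_, ?_⟩
    · intro x' hx'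
      have := hA x' hx'
      rw [shift_sum x' y A cA hx'.2 hy.2, shift_sum x y A cA hx.2 hy.2] at this
      linarith
    · intro y' hy'
      have := hB y' hy'
      rw [shift_sum x y' B cB hx.2 hy'.2, shift_sum x y B cB hx.2 hy.2] at this
      linarith

end LH


open Finset

namespace LH

set_option linter.unusedVariables false
set_option maxHeartbeats 1000000

section GenericCount

variable {ι : Type*} [Fintype ι] [DecidableEq ι] {d : ℕ}
variable {a : ι → Fin d → ℝ} {b : ι → ℝ}

lemma count_zero (hray : NoRay a b) (hnd : Nondeg a b) {v : Fin d → ℝ}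
    (hv : Feas a b v) (hcard : (Lab a b v).card = d) {D : Finset ι}
    (hD : D ⊆ Lab a b v) (hDcard : D.card = d) :
    {u | Feas a b u ∧ (Lab a b u).card = d ∧ u ≠ v ∧ D ⊆ Lab a b u} = ∅ := by
  ext u
  simp only [Set.mem_setOf_eq, Set.mem_empty_iff_false, iff_false, not_and]
  intro hfu hcu hne hDu
  exact hne (unique_of_card hray hnd (le_of_eq hDcard.symm) hfu hv hDu hD)

lemma count_one (hray : NoRay a b) (hnd : Nondeg a b) {v : Fin d → ℝ}
    (hv : Feas a b v) (hcard : (Lab a b v).card = d) {D : Finset ι}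
    (hD : D ⊆ Lab a b v) (hDcard : D.card + 1 = d) :
    {u | Feas a b u ∧ (Lab a b u).card = d ∧ u ≠ v ∧ D ⊆ Lab a b u}.ncard = 1 := by
  classical
  -- identify D as an erase of Lab v
  obtain ⟨l, hl, hDe⟩ : ∃ l, l ∈ Lab a b v ∧ D = (Lab a b v).erase l := by
    have hne : ((Lab a b v) \ D).Nonempty := by
      rw [← Finset.card_pos, Finset.card_sdiff_of_subset hD, hcard]
      omega
    obtain ⟨l, hl⟩ := hne
    have hlv : l ∈ Lab a b v := (Finset.mem_sdiff.1 hl).1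
    have hlD : l ∉ D := (Finset.mem_sdiff.1 hl).2
    refine ⟨l, hlv, ?_⟩
    have hsub : D ⊆ (Lab a b v).erase l := fun e he =>
      Finset.mem_erase.2 ⟨fun h => hlD (h ▸ he), hD he⟩
    apply Finset.eq_of_subset_of_card_le hsub
    rw [Finset.card_erase_of_mem hlv, hcard]
    omega
  have hM : ((Lab a b v).erase l).card + 1 = d := by
    rw [Finset.card_erase_of_mem hl, hcard]
    have h1 := Finset.card_pos.2 ⟨l, hl⟩
    omega
  obtain ⟨v', hfv', hnev', hsub', hcard', hlnot'⟩ := pivot_exists hray hnd hv hcard hl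
  rw [Set.ncard_eq_one]
  refine ⟨v', ?_⟩
  ext u
  simp only [Set.mem_setOf_eq, Set.mem_singleton_iff]
  constructor
  · rintro ⟨hfu, hcu, hneu, hDu⟩
    by_contra hne
    exact pivot_unique hray hnd hM
      hv hfu hfv' (hDe ▸ hD) (hDe ▸ hDu) hsub' hcard hcu hcard'
      (Ne.symm hneu) (Ne.symm hnev') hne
  · rintro rfl
    exact ⟨hfv', hcard', hnev', hDe ▸ hsub'⟩

end GenericCount

end LH

namespace LH

set_option linter.unusedVariables false
set_option maxHeartbeats 1000000

variable {m n : ℕ}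

/-- the nodes of the Lemke–Howson graph: pairs of vertices covering all labels
except possibly `k0`. -/
def NodeS (A B : Fin m → Fin n → ℝ) (k0 : Fin m ⊕ Fin n) :
    Set ((Fin n → ℝ) × (Fin m → ℝ)) :=
  {p | Feas (aP A) bP p.1 ∧ (Lab (aP A) bP p.1).card = n ∧ Feas (aQ B) bQ p.2 ∧
    (Lab (aQ B) bQ p.2).card = m ∧
    ∀ l, l ≠ k0 → l ∈ Lab (aP A) bP p.1 ∨ l ∈ Lab (aQ B) bQ p.2}

/-- adjacency in the Lemke–Howson graph. -/
def AdjR (A B : Fin m → Fin n → ℝ) (k0 : Fin m ⊕ Fin n)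
    (p q : (Fin n → ℝ) × (Fin m → ℝ)) : Prop :=
  (p.1 = q.1 ∧ p.2 ≠ q.2 ∧ ∀ l, l ≠ k0 → l ∈ Lab (aP A) bP p.1 ∨
      (l ∈ Lab (aQ B) bQ p.2 ∧ l ∈ Lab (aQ B) bQ q.2)) ∨
  (p.2 = q.2 ∧ p.1 ≠ q.1 ∧ ∀ l, l ≠ k0 → (l ∈ Lab (aP A) bP p.1 ∧
      l ∈ Lab (aP A) bP q.1) ∨ l ∈ Lab (aQ B) bQ p.2)

lemma adjR_symm {A B : Fin m → Fin n → ℝ} {k0 : Fin m ⊕ Fin n}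
    {p q : (Fin n → ℝ) × (Fin m → ℝ)} (h : AdjR A B k0 p q) : AdjR A B k0 q p := by
  rcases h with ⟨h1, h2, h3⟩ | ⟨h1, h2, h3⟩
  · left
    refine ⟨h1.symm, Ne.symm h2, fun l hl => ?_⟩
    rcases h3 l hl with h | ⟨ha, hb⟩
    · left; rw [← h1]; exact h
    · right; exact ⟨hb, ha⟩
  · right
    refine ⟨h1.symm, Ne.symm h2, fun l hl => ?_⟩
    rcases h3 l hl with ⟨ha, hb⟩ | h
    · left; exact ⟨hb, ha⟩
    · right; rw [← h1]; exact h

lemma adjR_irrefl {A B : Fin m → Fin n → ℝ} {k0 : Fin m ⊕ Fin n}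
    {p : (Fin n → ℝ) × (Fin m → ℝ)} (h : AdjR A B k0 p p) : False := by
  rcases h with ⟨-, h2, -⟩ | ⟨-, h2, -⟩ <;> exact h2 rfl

lemma nbr_snd_eq {A B : Fin m → Fin n → ℝ} {k0 : Fin m ⊕ Fin n}
    {p : (Fin n → ℝ) × (Fin m → ℝ)} (hp : p ∈ NodeS A B k0) :
    {q | q ∈ NodeS A B k0 ∧ AdjR A B k0 p q ∧ p.2 = q.2} =
      (fun u => (u, p.2)) '' {u | Feas (aP A) bP u ∧ (Lab (aP A) bP u).card = n ∧
        u ≠ p.1 ∧ ((Finset.univ \ {k0}) \ Lab (aQ B) bQ p.2) ⊆ Lab (aP A) bP u} := by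
  obtain ⟨hpf1, hpc1, hpf2, hpc2, hpcov⟩ := hp
  ext q
  simp only [Set.mem_setOf_eq, Set.mem_image]
  constructor
  · rintro ⟨hqS, hadj, heq2⟩
    obtain ⟨hqf1, hqc1, hqf2, hqc2, hqcov⟩ := hqS
    rcases hadj with ⟨-, hne2, -⟩ | ⟨-, hne1, hcov⟩
    · exact absurd heq2 hne2
    refine ⟨q.1, ⟨hqf1, hqc1, Ne.symm hne1, fun l hl => ?_⟩, ?_⟩
    · rw [Finset.mem_sdiff, Finset.mem_sdiff] at hl
      obtain ⟨⟨-, hlk⟩, hlp2⟩ := hl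
      rw [Finset.mem_singleton] at hlk
      rcases hcov l hlk with ⟨-, hq⟩ | h
      · exact hq
      · exact absurd h hlp2
    · rw [heq2]
  · rintro ⟨u, ⟨huf, huc, hune, husub⟩, rfl⟩
    have hcov' : ∀ l, l ≠ k0 → l ∉ Lab (aQ B) bQ p.2 → l ∈ Lab (aP A) bP u := by
      intro l hlk hlp2
      apply husub
      rw [Finset.mem_sdiff, Finset.mem_sdiff]
      exact ⟨⟨Finset.mem_univ l, by rw [Finset.mem_singleton]; exact hlk⟩, hlp2⟩
    refine ⟨⟨huf, huc, hpf2, hpc2, fun l hl => ?_⟩, ?_, rfl⟩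
    · by_cases h2 : l ∈ Lab (aQ B) bQ p.2
      · right; exact h2
      · left; exact hcov' l hl h2
    · right
      refine ⟨rfl, Ne.symm hune, fun l hl => ?_⟩
      by_cases h2 : l ∈ Lab (aQ B) bQ p.2
      · right; exact h2
      · left
        refine ⟨(hpcov l hl).resolve_right h2, hcov' l hl h2⟩

lemma nbr_fst_eq {A B : Fin m → Fin n → ℝ} {k0 : Fin m ⊕ Fin n}
    {p : (Fin n → ℝ) × (Fin m → ℝ)} (hp : p ∈ NodeS A B k0) :
    {q | q ∈ NodeS A B k0 ∧ AdjR A B k0 p q ∧ p.1 = q.1} =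
      (fun w => (p.1, w)) '' {w | Feas (aQ B) bQ w ∧ (Lab (aQ B) bQ w).card = m ∧
        w ≠ p.2 ∧ ((Finset.univ \ {k0}) \ Lab (aP A) bP p.1) ⊆ Lab (aQ B) bQ w} := by
  obtain ⟨hpf1, hpc1, hpf2, hpc2, hpcov⟩ := hp
  ext q
  simp only [Set.mem_setOf_eq, Set.mem_image]
  constructor
  · rintro ⟨hqS, hadj, heq1⟩
    obtain ⟨hqf1, hqc1, hqf2, hqc2, hqcov⟩ := hqS
    rcases hadj with ⟨-, hne2, hcov⟩ | ⟨-, hne1, -⟩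
    swap
    · exact absurd heq1 hne1
    refine ⟨q.2, ⟨hqf2, hqc2, Ne.symm hne2, fun l hl => ?_⟩, ?_⟩
    · rw [Finset.mem_sdiff, Finset.mem_sdiff] at hl
      obtain ⟨⟨-, hlk⟩, hlp1⟩ := hl
      rw [Finset.mem_singleton] at hlk
      rcases hcov l hlk with h | ⟨-, hq⟩
      · exact absurd h hlp1
      · exact hq
    · rw [heq1]
  · rintro ⟨w, ⟨hwf, hwc, hwne, hwsub⟩, rfl⟩
    have hcov' : ∀ l, l ≠ k0 → l ∉ Lab (aP A) bP p.1 → l ∈ Lab (aQ B) bQ w := by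
      intro l hlk hlp1
      apply hwsub
      rw [Finset.mem_sdiff, Finset.mem_sdiff]
      exact ⟨⟨Finset.mem_univ l, by rw [Finset.mem_singleton]; exact hlk⟩, hlp1⟩
    refine ⟨⟨hpf1, hpc1, hwf, hwc, fun l hl => ?_⟩, ?_, rfl⟩
    · by_cases h1 : l ∈ Lab (aP A) bP p.1
      · left; exact h1
      · right; exact hcov' l hl h1
    · left
      refine ⟨rfl, Ne.symm hwne, fun l hl => ?_⟩
      by_cases h1 : l ∈ Lab (aP A) bP p.1
      · left; exact h1
      · right
        refine ⟨(hpcov l hl).resolve_left h1, hcov' l hl h1⟩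

end LH

namespace LH

set_option linter.unusedVariables false
set_option maxHeartbeats 1000000

variable {m n : ℕ}

lemma sdiff_card {ι : Type*} [Fintype ι] [DecidableEq ι] (k0 : ι) (t : Finset ι) :
    ((Finset.univ \ {k0}) \ t).card =
      if k0 ∈ t then Fintype.card ι - t.card else Fintype.card ι - (t.card + 1) := by
  have heq : (Finset.univ \ {k0}) \ t = (insert k0 t)ᶜ := by
    ext l
    simp only [Finset.mem_sdiff, Finset.mem_compl, Finset.mem_insert, Finset.mem_singleton,
      Finset.mem_univ, true_and]
    tauto
  rw [heq, Finset.card_compl]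
  by_cases h : k0 ∈ t
  · rw [if_pos h, Finset.insert_eq_self.2 h]
  · rw [if_neg h, Finset.card_insert_of_notMem h]

lemma not_both {A B : Fin m → Fin n → ℝ} {k0 : Fin m ⊕ Fin n}
    {p : (Fin n → ℝ) × (Fin m → ℝ)} (hp : p ∈ NodeS A B k0) :
    ¬(k0 ∈ Lab (aP A) bP p.1 ∧ k0 ∈ Lab (aQ B) bQ p.2) := by
  classical
  rintro ⟨h1, h2⟩
  obtain ⟨hpf1, hpc1, hpf2, hpc2, hpcov⟩ := hp
  have huniv : (Finset.univ : Finset (Fin m ⊕ Fin n)) ⊆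
      Lab (aP A) bP p.1 ∪ Lab (aQ B) bQ p.2 := by
    intro l _
    by_cases hl : l = k0
    · subst hl; exact Finset.mem_union.2 (Or.inl h1)
    · rcases hpcov l hl with h | h
      · exact Finset.mem_union.2 (Or.inl h)
      · exact Finset.mem_union.2 (Or.inr h)
  have hcard := Finset.card_le_card huniv
  have hcu : (Finset.univ : Finset (Fin m ⊕ Fin n)).card = m + n := by
    rw [Finset.card_univ, Fintype.card_sum, Fintype.card_fin, Fintype.card_fin]
  have hint : 0 < (Lab (aP A) bP p.1 ∩ Lab (aQ B) bQ p.2).card :=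
    Finset.card_pos.2 ⟨k0, Finset.mem_inter.2 ⟨h1, h2⟩⟩
  have := Finset.card_union_add_card_inter (Lab (aP A) bP p.1) (Lab (aQ B) bQ p.2)
  omega

lemma nbrs_ncard {A B : Fin m → Fin n → ℝ} {k0 : Fin m ⊕ Fin n} (hm : 1 ≤ m) (hn : 1 ≤ n)
    (hrayP : NoRay (aP A) bP) (hndP : Nondeg (aP A) bP)
    (hrayQ : NoRay (aQ B) bQ) (hndQ : Nondeg (aQ B) bQ)
    (hSfin : (NodeS A B k0).Finite)
    {p : (Fin n → ℝ) × (Fin m → ℝ)} (hp : p ∈ NodeS A B k0) :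
    {q | q ∈ NodeS A B k0 ∧ AdjR A B k0 p q}.ncard =
      (if k0 ∈ Lab (aQ B) bQ p.2 then 0 else 1) +
        (if k0 ∈ Lab (aP A) bP p.1 then 0 else 1) := by
  classical
  obtain ⟨hpf1, hpc1, hpf2, hpc2, hpcov⟩ := hp
  set T1 := {q | q ∈ NodeS A B k0 ∧ AdjR A B k0 p q ∧ p.1 = q.1} with hT1
  set T2 := {q | q ∈ NodeS A B k0 ∧ AdjR A B k0 p q ∧ p.2 = q.2} with hT2
  have hunion : {q | q ∈ NodeS A B k0 ∧ AdjR A B k0 p q} = T1 ∪ T2 := by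
    ext q
    simp only [hT1, hT2, Set.mem_setOf_eq, Set.mem_union]
    constructor
    · rintro ⟨hqS, hadj⟩
      rcases hadj with h | h
      · exact Or.inl ⟨hqS, Or.inl h, h.1⟩
      · exact Or.inr ⟨hqS, Or.inr h, h.1⟩
    · rintro (⟨hqS, hadj, -⟩ | ⟨hqS, hadj, -⟩) <;> exact ⟨hqS, hadj⟩
  have hdisj : Disjoint T1 T2 := by
    rw [Set.disjoint_left]
    rintro q ⟨-, hadj, he1⟩ ⟨-, -, he2⟩
    have : p = q := Prod.ext he1 he2
    rw [← this] at hadj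
    exact adjR_irrefl hadj
  have hT1fin : T1.Finite := hSfin.subset (fun q hq => hq.1)
  have hT2fin : T2.Finite := hSfin.subset (fun q hq => hq.1)
  rw [hunion, Set.ncard_union_eq hdisj hT1fin hT2fin]
  have hcu : Fintype.card (Fin m ⊕ Fin n) = m + n := by
    rw [Fintype.card_sum, Fintype.card_fin, Fintype.card_fin]
  -- count T2 (pivots in P)
  have hDsub : ((Finset.univ \ {k0}) \ Lab (aQ B) bQ p.2) ⊆ Lab (aP A) bP p.1 := by
    intro l hl
    rw [Finset.mem_sdiff, Finset.mem_sdiff, Finset.mem_singleton] at hl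
    exact (hpcov l hl.1.2).resolve_right hl.2
  have hT2card : T2.ncard = if k0 ∈ Lab (aQ B) bQ p.2 then 0 else 1 := by
    rw [hT2, nbr_snd_eq ⟨hpf1, hpc1, hpf2, hpc2, hpcov⟩]
    rw [Set.ncard_image_of_injective _ (fun u u' h => congrArg Prod.fst h)]
    have hDcard := sdiff_card k0 (Lab (aQ B) bQ p.2)
    rw [hpc2, hcu] at hDcard
    by_cases hk : k0 ∈ Lab (aQ B) bQ p.2
    · rw [if_pos hk] at hDcard ⊢
      rw [count_zero hrayP hndP hpf1 hpc1 hDsub (by omega)]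
      exact Set.ncard_empty _
    · rw [if_neg hk] at hDcard ⊢
      exact count_one hrayP hndP hpf1 hpc1 hDsub (by omega)
  -- count T1 (pivots in Q)
  have hEsub : ((Finset.univ \ {k0}) \ Lab (aP A) bP p.1) ⊆ Lab (aQ B) bQ p.2 := by
    intro l hl
    rw [Finset.mem_sdiff, Finset.mem_sdiff, Finset.mem_singleton] at hl
    exact (hpcov l hl.1.2).resolve_left hl.2
  have hT1card : T1.ncard = if k0 ∈ Lab (aP A) bP p.1 then 0 else 1 := by
    rw [hT1, nbr_fst_eq ⟨hpf1, hpc1, hpf2, hpc2, hpcov⟩]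
    rw [Set.ncard_image_of_injective _ (fun w w' h => congrArg Prod.snd h)]
    have hEcard := sdiff_card k0 (Lab (aP A) bP p.1)
    rw [hpc1, hcu] at hEcard
    by_cases hk : k0 ∈ Lab (aP A) bP p.1
    · rw [if_pos hk] at hEcard ⊢
      rw [count_zero hrayQ hndQ hpf2 hpc2 hEsub (by omega)]
      exact Set.ncard_empty _
    · rw [if_neg hk] at hEcard ⊢
      exact count_one hrayQ hndQ hpf2 hpc2 hEsub (by omega)
  rw [hT1card, hT2card]
  ring

end LH

namespace LH

set_option linter.unusedVariables false
set_option maxHeartbeats 1000000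

variable {m n : ℕ}

lemma complete_eq_nodes {A B : Fin m → Fin n → ℝ} (k0 : Fin m ⊕ Fin n)
    (hndP : Nondeg (aP A) bP) (hndQ : Nondeg (aQ B) bQ) :
    Complete A B = {p | p ∈ NodeS A B k0 ∧
      (k0 ∈ Lab (aP A) bP p.1 ∨ k0 ∈ Lab (aQ B) bQ p.2)} := by
  classical
  ext p
  simp only [Complete, NodeS, Set.mem_setOf_eq]
  constructor
  · rintro ⟨hf1, hf2, hcov⟩
    have hsub : (Finset.univ : Finset (Fin m ⊕ Fin n)) ⊆
        Lab (aP A) bP p.1 ∪ Lab (aQ B) bQ p.2 := by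
      intro l _
      rcases hcov l with h | h
      · exact Finset.mem_union.2 (Or.inl h)
      · exact Finset.mem_union.2 (Or.inr h)
    have hcards := Finset.card_le_card hsub
    have hle := Finset.card_union_le (Lab (aP A) bP p.1) (Lab (aQ B) bQ p.2)
    have hcu : (Finset.univ : Finset (Fin m ⊕ Fin n)).card = m + n := by
      rw [Finset.card_univ, Fintype.card_sum, Fintype.card_fin, Fintype.card_fin]
    have h1 := hndP _ hf1
    have h2 := hndQ _ hf2
    refine ⟨⟨hf1, by omega, hf2, by omega, fun l _ => hcov l⟩, hcov k0⟩
  · rintro ⟨⟨hf1, hc1, hf2, hc2, hcov⟩, hk⟩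
    refine ⟨hf1, hf2, fun l => ?_⟩
    by_cases hl : l = k0
    · subst hl; exact hk
    · exact hcov l hl

lemma even_complete {A B : Fin m → Fin n → ℝ} (hm : 1 ≤ m) (hn : 1 ≤ n)
    (hrayP : NoRay (aP A) bP) (hndP : Nondeg (aP A) bP)
    (hrayQ : NoRay (aQ B) bQ) (hndQ : Nondeg (aQ B) bQ) :
    Even ((Complete A B).ncard) := by
  classical
  set k0 : Fin m ⊕ Fin n := Sum.inl ⟨0, hm⟩ with hk0
  have hSfin : (NodeS A B k0).Finite := by
    apply Set.Finite.subset (Set.Finite.prod (vset_finite hrayP hndP) (vset_finite hrayQ hndQ))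
    rintro p ⟨h1, h2, h3, h4, -⟩
    exact Set.mem_prod.2 ⟨⟨h1, h2⟩, ⟨h3, h4⟩⟩
  set V := hSfin.toFinset with hV
  let G : SimpleGraph {q // q ∈ V} :=
    { Adj := fun v w => AdjR A B k0 v.1 w.1
      symm := ⟨fun v w h => adjR_symm h⟩
      loopless := ⟨fun v h => adjR_irrefl h⟩ }
  letI : DecidableRel G.Adj := Classical.decRel _
  have hdeg : ∀ v : {q // q ∈ V}, G.degree v =
      {q | q ∈ NodeS A B k0 ∧ AdjR A B k0 v.1 q}.ncard := by
    intro v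
    have himg : {q | q ∈ NodeS A B k0 ∧ AdjR A B k0 v.1 q} =
        Subtype.val '' {w : {q // q ∈ V} | G.Adj v w} := by
      ext q
      simp only [Set.mem_setOf_eq, Set.mem_image]
      constructor
      · rintro ⟨hqS, hadj⟩
        exact ⟨⟨q, hSfin.mem_toFinset.2 hqS⟩, hadj, rfl⟩
      · rintro ⟨w, hw, rfl⟩
        exact ⟨hSfin.mem_toFinset.1 w.2, hw⟩
    rw [himg, Set.ncard_image_of_injective _ Subtype.val_injective]
    have : {w : {q // q ∈ V} | G.Adj v w} = ↑(G.neighborFinset v) := by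
      ext w
      simp [SimpleGraph.mem_neighborFinset]
    rw [this, Set.ncard_coe_finset]
    rfl
  have hodd : ∀ v : {q // q ∈ V}, Odd (G.degree v) ↔
      (k0 ∈ Lab (aP A) bP (v.1).1 ∨ k0 ∈ Lab (aQ B) bQ (v.1).2) := by
    intro v
    have hvS : v.1 ∈ NodeS A B k0 := hSfin.mem_toFinset.1 v.2
    rw [hdeg v, nbrs_ncard hm hn hrayP hndP hrayQ hndQ hSfin hvS]
    by_cases h1 : k0 ∈ Lab (aP A) bP (v.1).1 <;>
      by_cases h2 : k0 ∈ Lab (aQ B) bQ (v.1).2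
    · exact absurd ⟨h1, h2⟩ (not_both hvS)
    · simp [h1, h2]
    · simp [h1, h2]
    · rw [if_neg h1, if_neg h2]
      constructor
      · intro h
        rw [Nat.odd_iff] at h
        omega
      · intro h
        rcases h with h | h
        · exact absurd h h1
        · exact absurd h h2
  have heven := G.even_card_odd_degree_vertices
  have hC : Complete A B = Subtype.val ''
      (↑(Finset.univ.filter (fun v : {q // q ∈ V} => Odd (G.degree v))) :
        Set {q // q ∈ V}) := by
    rw [complete_eq_nodes k0 hndP hndQ]
    ext p
    simp only [Set.mem_setOf_eq, Set.mem_image, Finset.coe_filter, Finset.mem_univ, true_and]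
    constructor
    · rintro ⟨hpS, hk⟩
      refine ⟨⟨p, hSfin.mem_toFinset.2 hpS⟩, ?_, rfl⟩
      rw [hodd]
      exact hk
    · rintro ⟨w, hw, rfl⟩
      exact ⟨hSfin.mem_toFinset.1 w.2, (hodd w).1 hw⟩
  rw [hC, Set.ncard_image_of_injective _ Subtype.val_injective, Set.ncard_coe_finset]
  exact heven

end LH

/-- a nondegenerate bimatrix game has a finite, odd number of Nash
equilibria. -/
theorem nash_finite_odd {m n : ℕ} (hm : 1 ≤ m) (hn : 1 ≤ n)
    (A B : Fin m → Fin n → ℝ)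
    (hP : ∀ v, MemP A v → (LabelP A v).ncard ≤ n)
    (hQ : ∀ w, MemQ B w → (LabelQ B w).ncard ≤ m) :
    {p : (Fin m → ℝ) × (Fin n → ℝ) | IsNash A B p.1 p.2}.Finite ∧
      Odd {p : (Fin m → ℝ) × (Fin n → ℝ) | IsNash A B p.1 p.2}.ncard := by
  classical
  open LH in
  set cA : ℝ := 1 + ∑ i, ∑ j, |A i j| with hcA
  set cB : ℝ := 1 + ∑ i, ∑ j, |B i j| with hcB
  set A' : Fin m → Fin n → ℝ := fun i j => A i j + cA with hA'def
  set B' : Fin m → Fin n → ℝ := fun i j => B i j + cB with hB'def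
  have habs : ∀ (C : Fin m → Fin n → ℝ) (i : Fin m) (j : Fin n),
      |C i j| ≤ ∑ i', ∑ j', |C i' j'| := by
    intro C i j
    calc |C i j| ≤ ∑ j', |C i j'| :=
          Finset.single_le_sum (f := fun j' => |C i j'|) (fun _ _ => abs_nonneg _)
            (Finset.mem_univ j)
      _ ≤ ∑ i', ∑ j', |C i' j'| :=
          Finset.single_le_sum (f := fun i' => ∑ j', |C i' j'|)
            (fun _ _ => Finset.sum_nonneg (fun _ _ => abs_nonneg _)) (Finset.mem_univ i)
  have hA1 : ∀ i j, 1 ≤ A' i j := by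
    intro i j
    have h1 := habs A i j
    have h2 := abs_le.1 (le_refl |A i j|)
    have := neg_abs_le (A i j)
    simp only [hA'def, hcA]
    linarith
  have hB1 : ∀ i j, 1 ≤ B' i j := by
    intro i j
    have h1 := habs B i j
    have := neg_abs_le (B i j)
    simp only [hB'def, hcB]
    linarith
  have hndP : Nondeg (aP A') bP := nondeg_aP hP
  have hndQ : Nondeg (aQ B') bQ := nondeg_aQ hQ
  have hrayP : NoRay (aP A') bP := noRay_aP A' hA1 ⟨0, hm⟩
  have hrayQ : NoRay (aQ B') bQ := noRay_aQ B' hB1 ⟨0, hn⟩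
  set E := {p : (Fin m → ℝ) × (Fin n → ℝ) | IsNash A B p.1 p.2} with hE
  have hEshift : E = {p : (Fin m → ℝ) × (Fin n → ℝ) | IsNash A' B' p.1 p.2} := by
    ext p
    exact isNash_shift A B cA cB p.1 p.2
  set K := Complete A' B' with hK
  set z0 : (Fin n → ℝ) × (Fin m → ℝ) := (0, 0) with hz0
  have hz0K : z0 ∈ K := by
    refine ⟨?_, ?_, ?_⟩
    · rw [feas_aP_iff]
      constructor
      · intro i; simp [hz0]
      · intro j; simp [hz0]
    · rw [feas_aQ_iff]
      constructor
      · intro j; simp [hz0]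
      · intro i; simp [hz0]
    · intro l
      cases l with
      | inl i => right; rw [mem_Lab_aQ_inl]; simp [hz0]
      | inr j => left; rw [mem_Lab_aP_inr]; simp [hz0]
  set k0 : Fin m ⊕ Fin n := Sum.inl ⟨0, hm⟩ with hk0
  have hKfin : K.Finite := by
    rw [hK, complete_eq_nodes k0 hndP hndQ]
    apply Set.Finite.subset (Set.Finite.prod (vset_finite hrayP hndP) (vset_finite hrayQ hndQ))
    rintro p ⟨⟨h1, h2, h3, h4, -⟩, -⟩
    exact Set.mem_prod.2 ⟨⟨h1, h2⟩, ⟨h3, h4⟩⟩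
  have heven : Even (K.ncard) := even_complete hm hn hrayP hndP hrayQ hndQ
  -- the bijection
  have hne1 : ∀ p ∈ K \ {z0}, p.1 ≠ 0 := by
    rintro p ⟨hpK, hpz⟩ h1
    have h2 := (complete_zero_iff hpK).1 h1
    apply hpz
    rw [Set.mem_singleton_iff]
    exact Prod.ext h1 h2
  have hEeq : E = toEq '' (K \ {z0}) := by
    rw [hEshift]
    ext e
    simp only [Set.mem_setOf_eq, Set.mem_image]
    constructor
    · intro hN
      obtain ⟨hpair, hv1, hv2, hround⟩ := forward hA1 hB1 hN
      refine ⟨toPair A' B' (e.1, e.2), ⟨hpair, ?_⟩, ?_⟩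
      · rw [Set.mem_singleton_iff]
        intro h
        apply hv1
        rw [h]
      · rw [hround]
    · rintro ⟨p, hp, rfl⟩
      exact (backward hp.1 (hne1 p hp)).1
  have hinj : Set.InjOn toEq (K \ {z0}) := by
    intro p hp p' hp' heq
    have h1 := (backward hp.1 (hne1 p hp)).2
    have h2 := (backward hp'.1 (hne1 p' hp')).2
    rw [← h1, ← h2, heq]
  have hKdfin : (K \ {z0}).Finite := hKfin.subset Set.diff_subset
  constructor
  · rw [hEeq]
    exact hKdfin.image _
  · rw [hEeq, Set.ncard_image_of_injOn hinj,
      Set.ncard_diff_singleton_of_mem hz0K]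
    have hpos : 0 < K.ncard := (Set.ncard_pos hKfin).2 ⟨z0, hz0K⟩
    obtain ⟨t, ht⟩ := heven
    exact ⟨t - 1, by omega⟩
end

section
/- Assume C = −A. For every a ∈ ℝ: (i) for all (y,π₁) ∈ P and (x,λ,π₂) ∈ Q' with λ = a, one has a * (∑ j, β j * y j) − π₁ − π₂ ≤ 0; (ii) the set of such points achieving equality (i.e., the optimal set of the linear program LP(a)) equals {((y,π₁),(x,λ,π₂)) ∈ N | λ = a}; and (iii) this set is nonempty. -/
open Finset Pointwise

lemma aux_minimax {m n : ℕ} (hm : 1 ≤ m) (hn : 1 ≤ n) (D : Fin m → Fin n → ℝ) :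
    ∃ (x : Fin m → ℝ) (y : Fin n → ℝ) (v : ℝ),
      (∀ i, 0 ≤ x i) ∧ (∑ i, x i) = 1 ∧ (∀ j, 0 ≤ y j) ∧ (∑ j, y j) = 1 ∧
      (∀ j, v ≤ ∑ i, x i * D i j) ∧ (∀ i, ∑ j, D i j * y j ≤ v) := by
  haveI : Nonempty (Fin m) := ⟨⟨0, hm⟩⟩
  haveI : Nonempty (Fin n) := ⟨⟨0, hn⟩⟩
  set h : (Fin m → ℝ) → ℝ :=
    fun x => Finset.univ.inf' Finset.univ_nonempty (fun j => ∑ i, x i * D i j) with hh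
  have hcont : Continuous h := by
    apply Continuous.finset_inf'_apply Finset.univ_nonempty
    intro j _
    exact continuous_finset_sum _ fun i _ => (continuous_apply i).mul continuous_const
  have hx0 : (fun _ : Fin m => (m : ℝ)⁻¹) ∈ stdSimplex ℝ (Fin m) := by
    constructor
    · intro i; positivity
    · have hm0 : (m : ℝ) ≠ 0 := by positivity
      simp [Finset.sum_const, Finset.card_univ, hm0]
  obtain ⟨xs, hxs, hmax⟩ := (isCompact_stdSimplex ℝ (Fin m)).exists_isMaxOn
    ⟨_, hx0⟩ hcont.continuousOn
  set v : ℝ := h xs with hv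
  have hvle : ∀ j, v ≤ ∑ i, xs i * D i j := fun j =>
    Finset.inf'_le _ (Finset.mem_univ j)
  have key : ∃ y ∈ stdSimplex ℝ (Fin n), ∀ i, ∑ j, D i j * y j ≤ v := by
    by_contra hcon
    push_neg at hcon
    set T : (Fin n → ℝ) →ₗ[ℝ] (Fin m → ℝ) :=
      ∑ j, (LinearMap.proj j : (Fin n → ℝ) →ₗ[ℝ] ℝ).smulRight (fun i => D i j - v) with hT
    have hTapp : ∀ (y : Fin n → ℝ) (i : Fin m), T y i = ∑ j, (D i j - v) * y j := by
      intro y i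
      simp [hT, LinearMap.sum_apply, Finset.sum_apply, mul_comm]
    have hTsimp : ∀ y ∈ stdSimplex ℝ (Fin n), ∀ i, T y i = (∑ j, D i j * y j) - v := by
      intro y hy i
      rw [hTapp]
      rw [show (∑ j, (D i j - v) * y j) = ∑ j, (D i j * y j - v * y j) from
        Finset.sum_congr rfl fun j _ => by ring]
      rw [Finset.sum_sub_distrib, ← Finset.mul_sum, hy.2, mul_one]
    set Orth : Set (Fin m → ℝ) := {s | ∀ i, 0 ≤ s i} with hOrth
    set K : Set (Fin m → ℝ) := (T '' stdSimplex ℝ (Fin n)) + Orth with hK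
    have hmemK : ∀ y ∈ stdSimplex ℝ (Fin n), ∀ s ∈ Orth, T y + s ∈ K := by
      intro y hy s hs
      exact Set.add_mem_add (Set.mem_image_of_mem _ hy) hs
    have hKconv : Convex ℝ K := by
      apply Convex.add ((convex_stdSimplex ℝ (Fin n)).linear_image T)
      intro p hp q hq s t hs ht _ i
      exact add_nonneg (smul_nonneg hs (hp i)) (smul_nonneg ht (hq i))
    have hOrthClosed : IsClosed Orth := by
      have : Orth = ⋂ i, {s : Fin m → ℝ | 0 ≤ s i} := by ext s; simp [hOrth]
      rw [this]
      exact isClosed_iInter fun i => isClosed_le continuous_const (continuous_apply i)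
    have hKclosed : IsClosed K :=
      hOrthClosed.add_left_of_isCompact
        ((isCompact_stdSimplex ℝ (Fin n)).image T.continuous_of_finiteDimensional)
    have h0K : (0 : Fin m → ℝ) ∉ K := by
      intro h0
      obtain ⟨p, hp, s, hs, hps⟩ := Set.mem_add.mp h0
      obtain ⟨y, hy, rfl⟩ := hp
      obtain ⟨i0, hi0⟩ := hcon y hy
      have h1 : T y i0 + s i0 = 0 := congrFun hps i0
      have h2 := hTsimp y hy i0
      have h3 : 0 ≤ s i0 := hs i0
      linarith
    obtain ⟨f, u, hfu, hu0⟩ := geometric_hahn_banach_closed_point hKconv hKclosed h0K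
    rw [map_zero] at hu0
    set g : Fin m → ℝ := fun i => f (Pi.single i 1) with hg
    have hrep : ∀ z : Fin m → ℝ, f z = ∑ i, z i * g i := by
      intro z
      have hz : z = ∑ i, z i • (Pi.single i 1 : Fin m → ℝ) := by
        funext k
        simp [Finset.sum_apply, Pi.single_apply, mul_comm]
      conv_lhs => rw [hz]
      rw [map_sum]
      refine Finset.sum_congr rfl fun i _ => ?_
      rw [map_smul, smul_eq_mul]
    -- base point
    have hy0 : (fun _ : Fin n => (n : ℝ)⁻¹) ∈ stdSimplex ℝ (Fin n) := by
      constructor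
      · intro j; positivity
      · have hn0 : (n : ℝ) ≠ 0 := by positivity
        simp [Finset.sum_const, Finset.card_univ, hn0]
    set y0 : Fin n → ℝ := fun _ => (n : ℝ)⁻¹ with hy0def
    have h0Orth : (0 : Fin m → ℝ) ∈ Orth := fun i => le_refl 0
    have hfy0 : f (T y0) < u := by
      have := hfu _ (hmemK y0 hy0 0 h0Orth)
      simpa using this
    have hgnp : ∀ i, g i ≤ 0 := by
      intro i
      by_contra hgi
      push_neg at hgi
      set t : ℝ := max 0 ((u - f (T y0)) / g i + 1) with ht
      have ht0 : 0 ≤ t := le_max_left _ _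
      have hsOrth : t • (Pi.single i 1 : Fin m → ℝ) ∈ Orth := by
        intro k
        simp only [Pi.smul_apply, smul_eq_mul]
        exact mul_nonneg ht0 (by by_cases hk : k = i <;> simp [Pi.single_apply, hk])
      have hmem := hfu _ (hmemK y0 hy0 _ hsOrth)
      rw [map_add, map_smul] at hmem
      have hfs : f (Pi.single i (1:ℝ)) = g i := rfl
      rw [smul_eq_mul, hfs] at hmem
      have h1 : (u - f (T y0)) / g i + 1 ≤ t := le_max_right _ _
      have h2 : ((u - f (T y0)) / g i + 1) * g i ≤ t * g i :=
        mul_le_mul_of_nonneg_right h1 (le_of_lt hgi)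
      have h3 : ((u - f (T y0)) / g i + 1) * g i = (u - f (T y0)) + g i := by
        field_simp
      linarith
    set S : ℝ := ∑ i, (-g i) with hS
    have hSnn : 0 ≤ S := Finset.sum_nonneg fun i _ => by linarith [hgnp i]
    have hSpos : 0 < S := by
      rcases lt_or_eq_of_le hSnn with h | h
      · exact h
      · exfalso
        have hall : ∀ i ∈ Finset.univ, -g i = 0 := by
          apply (Finset.sum_eq_zero_iff_of_nonneg (fun i _ => by linarith [hgnp i])).1 h.symm
        have : f (T y0) = 0 := by
          rw [hrep]
          apply Finset.sum_eq_zero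
          intro i _
          have := hall i (Finset.mem_univ i)
          have : g i = 0 := by linarith
          rw [this, mul_zero]
        linarith
    set xh : Fin m → ℝ := fun i => -g i / S with hxh
    have hxhmem : xh ∈ stdSimplex ℝ (Fin m) := by
      constructor
      · intro i
        exact div_nonneg (by linarith [hgnp i]) (le_of_lt hSpos)
      · rw [← Finset.sum_div, ← hS, div_self (ne_of_gt hSpos)]
    have hbig : ∀ j, v < ∑ i, xh i * D i j := by
      intro j
      have hej : Pi.single j (1:ℝ) ∈ stdSimplex ℝ (Fin n) := by
        constructor
        · intro k; by_cases hk : k = j <;> simp [Pi.single_apply, hk]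
        · simp [Pi.single_apply]
      have hfej : f (T (Pi.single j 1)) < u := by
        have := hfu _ (hmemK _ hej 0 h0Orth)
        simpa using this
      have hTej : ∀ i, T (Pi.single j (1:ℝ)) i = D i j - v := by
        intro i
        rw [hTapp]
        simp [Pi.single_apply]
      have hfval : f (T (Pi.single j 1)) = ∑ i, (D i j - v) * g i := by
        rw [hrep]
        exact Finset.sum_congr rfl fun i _ => by rw [hTej]
      have hcomp : ∑ i, xh i * D i j - v = -f (T (Pi.single j 1)) / S := by
        have h1 : ∑ i, xh i * D i j - v = ∑ i, xh i * (D i j - v) := by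
          rw [show (∑ i, xh i * (D i j - v)) = ∑ i, (xh i * D i j - xh i * v) from
            Finset.sum_congr rfl fun i _ => by ring]
          rw [Finset.sum_sub_distrib, ← Finset.sum_mul, hxhmem.2, one_mul]
        rw [h1, hfval, ← Finset.sum_neg_distrib, Finset.sum_div]
        refine Finset.sum_congr rfl fun i _ => ?_
        simp only [hxh]
        ring
      have : 0 < -f (T (Pi.single j 1)) / S :=
        div_pos (by linarith) hSpos
      linarith [hcomp]
    have hle : h xh ≤ v := hmax hxhmem
    have hgt : v < h xh := by
      rw [hh]
      rw [Finset.lt_inf'_iff]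
      intro j _
      exact hbig j
    linarith
  obtain ⟨y, hy, hyle⟩ := key
  exact ⟨xs, y, v, hxs.1, hxs.2, hy.1, hy.2, hvle, hyle⟩

/-- with `C = −A` and any `a ∈ ℝ`: (i) the objective of `LP(a)` is
nonpositive on the feasible set; (ii) its optimal (zero) set equals the set of
fully-labeled pairs with `λ = a`; (iii) this set is nonempty. -/
theorem LP_opt_is_N_slice {m n : ℕ} (hm : 1 ≤ m) (hn : 1 ≤ n)
    (A : Fin m → Fin n → ℝ) (β : Fin n → ℝ) (a : ℝ) :
    (∀ (y : Fin n → ℝ) (π₁ : ℝ) (x : Fin m → ℝ) (π₂ : ℝ),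
        MemP A (y, π₁) → MemQ' (fun i j => -A i j) β (x, a, π₂) →
        a * (∑ j, β j * y j) - π₁ - π₂ ≤ 0) ∧
    (∀ (y : Fin n → ℝ) (π₁ : ℝ) (x : Fin m → ℝ) (π₂ : ℝ),
        MemP A (y, π₁) → MemQ' (fun i j => -A i j) β (x, a, π₂) →
        (a * (∑ j, β j * y j) - π₁ - π₂ = 0 ↔
          MemN A (fun i j => -A i j) β ((y, π₁), (x, a, π₂)))) ∧
    (∃ (y : Fin n → ℝ) (π₁ : ℝ) (x : Fin m → ℝ) (π₂ : ℝ),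
        MemN A (fun i j => -A i j) β ((y, π₁), (x, a, π₂))) := by
  -- the slack identity, shared by parts (i) and (ii)
  have hkey : ∀ (y : Fin n → ℝ) (π₁ : ℝ) (x : Fin m → ℝ) (π₂ : ℝ),
      MemP A (y, π₁) → MemQ' (fun i j => -A i j) β (x, a, π₂) →
      a * (∑ j, β j * y j) - π₁ - π₂ =
        -((∑ i, x i * (π₁ - ∑ j, A i j * y j)) +
          (∑ j, y j * (π₂ - (∑ i, x i * (-A i j) + β j * a)))) := by
    intro y π₁ x π₂ hP hQ
    obtain ⟨hP1, hP2, hP3⟩ := hP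
    obtain ⟨hQ1, hQ2, hQ3⟩ := hQ
    simp only at hP3 hQ3
    have e1 : (∑ i, x i * (π₁ - ∑ j, A i j * y j))
        = π₁ - ∑ i, ∑ j, x i * A i j * y j := by
      have hterm : ∀ i, x i * (π₁ - ∑ j, A i j * y j)
          = x i * π₁ - ∑ j, x i * A i j * y j := by
        intro i
        rw [mul_sub, Finset.mul_sum]
        congr 1
        exact Finset.sum_congr rfl fun j _ => (mul_assoc _ _ _).symm
      rw [Finset.sum_congr rfl fun i _ => hterm i, Finset.sum_sub_distrib,
        ← Finset.sum_mul, hQ3, one_mul]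
    have e2 : (∑ j, y j * (π₂ - (∑ i, x i * (-A i j) + β j * a)))
        = π₂ + (∑ i, ∑ j, x i * A i j * y j) - a * ∑ j, β j * y j := by
      have hterm : ∀ j, y j * (π₂ - (∑ i, x i * (-A i j) + β j * a))
          = y j * π₂ + (∑ i, x i * A i j * y j) - β j * a * y j := by
        intro j
        have hin : y j * (∑ i, x i * (-A i j)) = -∑ i, x i * A i j * y j := by
          rw [Finset.mul_sum, ← Finset.sum_neg_distrib]
          exact Finset.sum_congr rfl fun i _ => by ring
        linear_combination (-1 : ℝ) * hin
      rw [Finset.sum_congr rfl fun j _ => hterm j, Finset.sum_sub_distrib,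
        Finset.sum_add_distrib, ← Finset.sum_mul, hP3, one_mul, Finset.sum_comm]
      have : a * ∑ j, β j * y j = ∑ j, β j * a * y j := by
        rw [Finset.mul_sum]; exact Finset.sum_congr rfl fun j _ => by ring
      rw [this]
    rw [e1, e2]; ring
  have hnn1 : ∀ (y : Fin n → ℝ) (π₁ : ℝ) (x : Fin m → ℝ),
      MemP A (y, π₁) → (∀ i, 0 ≤ x i) →
      ∀ i ∈ Finset.univ, 0 ≤ x i * (π₁ - ∑ j, A i j * y j) := by
    intro y π₁ x hP hx i _
    exact mul_nonneg (hx i) (sub_nonneg.2 (hP.1 i))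
  have hnn2 : ∀ (y : Fin n → ℝ) (x : Fin m → ℝ) (π₂ : ℝ),
      (∀ j, 0 ≤ y j) → MemQ' (fun i j => -A i j) β (x, a, π₂) →
      ∀ j ∈ Finset.univ, 0 ≤ y j * (π₂ - (∑ i, x i * (-A i j) + β j * a)) := by
    intro y x π₂ hy hQ j _
    exact mul_nonneg (hy j) (sub_nonneg.2 (hQ.2.1 j))
  have part1 : ∀ (y : Fin n → ℝ) (π₁ : ℝ) (x : Fin m → ℝ) (π₂ : ℝ),
      MemP A (y, π₁) → MemQ' (fun i j => -A i j) β (x, a, π₂) →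
      a * (∑ j, β j * y j) - π₁ - π₂ ≤ 0 := by
    intro y π₁ x π₂ hP hQ
    rw [hkey y π₁ x π₂ hP hQ]
    have h1 := Finset.sum_nonneg (hnn1 y π₁ x hP hQ.1)
    have h2 := Finset.sum_nonneg (hnn2 y x π₂ hP.2.1 hQ)
    linarith
  have part2 : ∀ (y : Fin n → ℝ) (π₁ : ℝ) (x : Fin m → ℝ) (π₂ : ℝ),
      MemP A (y, π₁) → MemQ' (fun i j => -A i j) β (x, a, π₂) →
      (a * (∑ j, β j * y j) - π₁ - π₂ = 0 ↔
        MemN A (fun i j => -A i j) β ((y, π₁), (x, a, π₂))) := by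
    intro y π₁ x π₂ hP hQ
    rw [hkey y π₁ x π₂ hP hQ]
    constructor
    · intro h0
      have h1 := Finset.sum_nonneg (hnn1 y π₁ x hP hQ.1)
      have h2 := Finset.sum_nonneg (hnn2 y x π₂ hP.2.1 hQ)
      have hz1 : (∑ i, x i * (π₁ - ∑ j, A i j * y j)) = 0 := by linarith
      have hz2 : (∑ j, y j * (π₂ - (∑ i, x i * (-A i j) + β j * a))) = 0 := by linarith
      have ht1 := (Finset.sum_eq_zero_iff_of_nonneg (hnn1 y π₁ x hP hQ.1)).1 hz1
      have ht2 := (Finset.sum_eq_zero_iff_of_nonneg (hnn2 y x π₂ hP.2.1 hQ)).1 hz2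
      refine ⟨hP, hQ, fun l => ?_⟩
      cases l with
      | inl i =>
        rcases mul_eq_zero.1 (ht1 i (Finset.mem_univ i)) with h | h
        · exact Set.mem_union_right _ h
        · refine Set.mem_union_left _ ?_
          show ∑ j, A i j * y j = π₁
          linarith
      | inr j =>
        rcases mul_eq_zero.1 (ht2 j (Finset.mem_univ j)) with h | h
        · exact Set.mem_union_left _ h
        · refine Set.mem_union_right _ ?_
          show ∑ i, x i * (-A i j) + β j * a = π₂
          linarith
    · rintro ⟨-, -, hlab⟩
      have hz1 : (∑ i, x i * (π₁ - ∑ j, A i j * y j)) = 0 := by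
        apply Finset.sum_eq_zero
        intro i _
        rcases hlab (Sum.inl i) with h | h
        · have h' : π₁ - ∑ j, A i j * y j = 0 := by
            rw [sub_eq_zero]; exact (h : ∑ j, A i j * y j = π₁).symm
          rw [h', mul_zero]
        · have h' : x i = 0 := h
          rw [h', zero_mul]
      have hz2 : (∑ j, y j * (π₂ - (∑ i, x i * (-A i j) + β j * a))) = 0 := by
        apply Finset.sum_eq_zero
        intro j _
        rcases hlab (Sum.inr j) with h | h
        · have h' : y j = 0 := h
          rw [h', zero_mul]
        · have h' : π₂ - (∑ i, x i * (-A i j) + β j * a) = 0 := by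
            rw [sub_eq_zero]
            exact (h : ∑ i, x i * (-A i j) + β j * a = π₂).symm
          rw [h', mul_zero]
      rw [hz1, hz2]; ring
  refine ⟨part1, part2, ?_⟩
  -- part 3 : existence via minimax
  obtain ⟨x, y, v, hx1, hx2, hy1, hy2, hvx0, hvy0⟩ :=
    aux_minimax hm hn (fun i j => A i j - β j * a)
  have hvx : ∀ j, v ≤ ∑ i, x i * (A i j - β j * a) := fun j => by simpa using hvx0 j
  have hvy : ∀ i, ∑ j, (A i j - β j * a) * y j ≤ v := fun i => by simpa using hvy0 i
  set π₁ : ℝ := v + a * ∑ j, β j * y j with hπ₁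
  set π₂ : ℝ := -v with hπ₂
  have hβa : a * ∑ j, β j * y j = ∑ j, β j * a * y j := by
    rw [Finset.mul_sum]; exact Finset.sum_congr rfl fun j _ => by ring
  have hP : MemP A (y, π₁) := by
    refine ⟨fun i => ?_, hy1, hy2⟩
    simp only
    show ∑ j, A i j * y j ≤ π₁
    have hsplit : ∑ j, A i j * y j
        = (∑ j, (A i j - β j * a) * y j) + ∑ j, β j * a * y j := by
      rw [← Finset.sum_add_distrib]
      exact Finset.sum_congr rfl fun j _ => by ring
    rw [hsplit, hπ₁, hβa]
    have := hvy i
    linarith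
  have hQ : MemQ' (fun i j => -A i j) β (x, a, π₂) := by
    refine ⟨hx1, fun j => ?_, hx2⟩
    show ∑ i, x i * (-A i j) + β j * a ≤ π₂
    have h1 : (∑ i, x i * (β j * a)) = β j * a := by
      rw [← Finset.sum_mul, hx2, one_mul]
    have hs : ∑ i, x i * (-A i j) + β j * a = -(∑ i, x i * (A i j - β j * a)) := by
      calc ∑ i, x i * (-A i j) + β j * a
          = ∑ i, x i * (-A i j) + ∑ i, x i * (β j * a) := by rw [h1]
        _ = ∑ i, (x i * (-A i j) + x i * (β j * a)) := (Finset.sum_add_distrib).symm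
        _ = ∑ i, -(x i * (A i j - β j * a)) := Finset.sum_congr rfl fun i _ => by ring
        _ = -(∑ i, x i * (A i j - β j * a)) := Finset.sum_neg_distrib _
    rw [hs, hπ₂]
    linarith [hvx j]
  have hobj : a * (∑ j, β j * y j) - π₁ - π₂ = 0 := by rw [hπ₁, hπ₂]; ring
  exact ⟨y, π₁, x, π₂, (part2 y π₁ x π₂ hP hQ).1 hobj⟩
end
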